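/- arXiv:1503.07648 — 10 statements merged into one kernel-verified Lean document; each statement's English description precedes it below -/
import Mathlib

section
/- For every sign matrix S, VC(S) ≤ dual-sign-rank(S) ≤ 2·VC(S) + 1, where dual-sign-rank(S) denotes the maximum size of a set of columns of S that is antipodally shattered in S. -/
/-- A sign matrix: all entries are `+1` or `-1`. -/
def IsSignMatrix {R C : Type*} (S : Matrix R C ℝ) : Prop :=
  ∀ i j, S i j = 1 ∨ S i j = -1

/-- A set `T` of columns of `S` is shattered if every sign pattern on `T` occurs as the
restriction of some row of `S` to `T`. -/
def Shattered {R C : Type*} (S : Matrix R C ℝ) (T : Finset C) : Prop :=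
  ∀ v : C → ℝ, (∀ c ∈ T, v c = 1 ∨ v c = -1) → ∃ r : R, ∀ c ∈ T, S r c = v c

/-- A set `T` of columns of `S` is antipodally shattered if for every sign pattern `v` on `T`,
either `v` or `-v` occurs as the restriction of some row of `S` to `T`. -/
def AntipodallyShattered {R C : Type*} (S : Matrix R C ℝ) (T : Finset C) : Prop :=
  ∀ v : C → ℝ, (∀ c ∈ T, v c = 1 ∨ v c = -1) →
    (∃ r : R, ∀ c ∈ T, S r c = v c) ∨ (∃ r : R, ∀ c ∈ T, S r c = -v c)

/-- The VC dimension of a sign matrix: the maximum size of a shattered set of columns. -/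
noncomputable def VCdim {R C : Type*} (S : Matrix R C ℝ) : ℕ :=
  sSup {k | ∃ T : Finset C, T.card = k ∧ Shattered S T}

/-- The dual sign rank of a sign matrix: the maximum size of an antipodally shattered set of
columns. -/
noncomputable def dualSignRank {R C : Type*} (S : Matrix R C ℝ) : ℕ :=
  sSup {k | ∃ T : Finset C, T.card = k ∧ AntipodallyShattered S T}

/-!
Shattered sets are antipodally shattered, which gives the lower bound. For the upper bound let
`T` be antipodally shattered, `k = #T`, `d = VC(S)`, and let `𝒜` be the family of sign patterns
on `T` realised by rows of `S`. Every `u ⊆ T` has `u ∈ 𝒜` or `T \ u ∈ 𝒜`, so `2 ^ k ≤ 2 #𝒜`.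
Every set shattered by `𝒜` is shattered by `S`, so the Sauer–Shelah lemma bounds `#𝒜` by
`∑ i ≤ d, k.choose i`. If `k ≥ 2d + 2`, the tails `[0, d]` and `[k - d, k]` of the binomial row
are disjoint, have equal sums and miss `d + 1`, so twice that sum is less than `2 ^ k`.
-/

open Finset

theorem Nat.two_mul_sum_choose_lt_two_pow {n d : ℕ} (h : 2 * d + 2 ≤ n) :
    2 * ∑ i ∈ Iic d, n.choose i < 2 ^ n := by
  have hlow_eq_high :
      ∑ i ∈ range (d + 1), n.choose i = ∑ i ∈ Ico (n - d) (n + 1), n.choose i := by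
    have hreflect := sum_Ico_reflect n.choose 0 (show d + 1 ≤ n + 1 by omega)
    rw [show n + 1 - (d + 1) = n - d by omega, Nat.sub_zero, ← range_eq_Ico] at hreflect
    rw [← hreflect]
    exact sum_congr rfl fun i hi => (Nat.choose_symm (by have := mem_range.1 hi; omega)).symm
  have hmiddle : 0 < ∑ i ∈ Ico (d + 1) (n - d), n.choose i :=
    (Nat.choose_pos (by omega)).trans_le
      (single_le_sum (fun _ _ => Nat.zero_le _) (mem_Ico.2 ⟨le_rfl, by omega⟩))
  have htotal := Nat.sum_range_choose n
  rw [← sum_range_add_sum_Ico _ (show d + 1 ≤ n + 1 by omega),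
    ← sum_Ico_consecutive _ (show d + 1 ≤ n - d by omega) (show n - d ≤ n + 1 by omega)] at htotal
  rw [← Nat.range_succ_eq_Iic]
  omega

theorem Finset.two_pow_card_le_two_mul_card_of_forall_mem_or_compl_mem {α : Type*} [Fintype α]
    [DecidableEq α] {𝒜 : Finset (Finset α)} (h : ∀ u, u ∈ 𝒜 ∨ uᶜ ∈ 𝒜) :
    2 ^ Fintype.card α ≤ 2 * #𝒜 :=
  calc 2 ^ Fintype.card α = #(univ : Finset (Finset α)) := by simp
    _ ≤ #(𝒜 ∪ 𝒜.image compl) := card_le_card fun u _ => by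
        rcases h u with hu | hu
        · exact mem_union_left _ hu
        · exact mem_union_right _ (mem_image.2 ⟨uᶜ, hu, compl_compl u⟩)
    _ ≤ #𝒜 + #(𝒜.image compl) := card_union_le _ _
    _ ≤ 2 * #𝒜 := by linarith [card_image_le (s := 𝒜) (f := compl)]

section SignMatrix

variable {R C D : Type*} (S : Matrix R C ℝ)

theorem Shattered.antipodallyShattered {T : Finset C} (h : Shattered S T) :
    AntipodallyShattered S T :=
  fun v hv => .inl (h v hv)

theorem bddAbove_card_setOf [Finite C] (P : Finset C → Prop) :
    BddAbove {k | ∃ T : Finset C, #T = k ∧ P T} :=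
  ((Set.finite_range card).subset <| by rintro _ ⟨T, hT, -⟩; exact ⟨T, hT⟩).bddAbove

theorem Shattered.card_le_vcdim [Finite C] {T : Finset C} (h : Shattered S T) :
    #T ≤ VCdim S :=
  le_csSup (bddAbove_card_setOf _) ⟨T, rfl, h⟩

theorem vcdim_le_dualSignRank [Finite C] : VCdim S ≤ dualSignRank S :=
  csSup_le_csSup' (bddAbove_card_setOf _) fun _ ⟨T, hcard, hshat⟩ =>
    ⟨T, hcard, hshat.antipodallyShattered⟩

theorem Shattered.map_of_submatrix {f : D ↪ C} {s : Finset D}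
    (h : Shattered (S.submatrix id f) s) : Shattered S (s.map f) := by
  intro v hv
  obtain ⟨r, hr⟩ := h (v ∘ f) fun d hd => hv (f d) (mem_map_of_mem f hd)
  refine ⟨r, fun c hc => ?_⟩
  obtain ⟨d, hd, rfl⟩ := mem_map.1 hc
  exact hr d hd

theorem AntipodallyShattered.submatrix_of_map {f : D ↪ C} {s : Finset D}
    (h : AntipodallyShattered S (s.map f)) : AntipodallyShattered (S.submatrix id f) s := by
  intro v hv
  have hext : ∀ d, Function.extend f v 1 (f d) = v d := f.injective.extend_apply v 1
  have hw : ∀ c ∈ s.map f, Function.extend f v 1 c = 1 ∨ Function.extend f v 1 c = -1 := by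
    intro c hc
    obtain ⟨d, hd, rfl⟩ := mem_map.1 hc
    rw [hext]
    exact hv d hd
  rcases h _ hw with ⟨r, hr⟩ | ⟨r, hr⟩
  · exact .inl ⟨r, fun d hd => (hr (f d) (mem_map_of_mem f hd)).trans (hext d)⟩
  · exact .inr ⟨r, fun d hd => (hr (f d) (mem_map_of_mem f hd)).trans (by rw [hext])⟩

theorem vcdim_submatrix_le [Finite C] [Finite D] (f : D ↪ C) :
    VCdim (S.submatrix id f) ≤ VCdim S :=
  csSup_le' fun _ ⟨_, hs, hshat⟩ => hs ▸ card_map f ▸ hshat.map_of_submatrix.card_le_vcdim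

def signPattern [DecidableEq C] (u : Finset C) : C → ℝ := fun c => if c ∈ u then 1 else -1

section RowPatterns

variable [Fintype C] [DecidableEq C]

theorem signPattern_compl (u : Finset C) : signPattern uᶜ = -signPattern u := by
  ext c
  by_cases hc : c ∈ u <;> simp [signPattern, hc]

open Classical in
noncomputable def rowPatterns : Finset (Finset C) :=
  univ.filter fun u => ∃ r, S r = signPattern u

theorem mem_rowPatterns {S : Matrix R C ℝ} {u : Finset C} :
    u ∈ rowPatterns S ↔ ∃ r, S r = signPattern u := by
  simp [rowPatterns]

theorem AntipodallyShattered.mem_rowPatterns_or_compl_mem (h : AntipodallyShattered S univ)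
    (u : Finset C) : u ∈ rowPatterns S ∨ uᶜ ∈ rowPatterns S := by
  have hu : ∀ c ∈ univ, signPattern u c = 1 ∨ signPattern u c = -1 := by
    intro c _
    by_cases hc : c ∈ u <;> simp [signPattern, hc]
  simp only [mem_rowPatterns, signPattern_compl, funext_iff, Pi.neg_apply]
  simpa using h _ hu

theorem Finset.Shatters.shattered_of_rowPatterns {s : Finset C}
    (h : (rowPatterns S).Shatters s) : Shattered S s := by
  intro v hv
  obtain ⟨u, hu, hsu⟩ := h (filter_subset (v · = 1) s)
  obtain ⟨r, hr⟩ := mem_rowPatterns.1 hu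
  refine ⟨r, fun c hc => ?_⟩
  have hcu : c ∈ u ↔ v c = 1 := by
    simpa [hc] using congrArg (c ∈ ·) hsu
  rw [hr, signPattern]
  rcases hv c hc with h1 | h1 <;> norm_num [hcu, h1]

theorem vcDim_rowPatterns_le_vcdim : (rowPatterns S).vcDim ≤ VCdim S :=
  Finset.sup_le fun _ hs => (mem_shatterer.1 hs).shattered_of_rowPatterns.card_le_vcdim

theorem AntipodallyShattered.card_le_two_mul_vcdim_add_one_of_univ
    (h : AntipodallyShattered S univ) : Fintype.card C ≤ 2 * VCdim S + 1 := by
  by_contra! hlarge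
  have hpatterns := two_pow_card_le_two_mul_card_of_forall_mem_or_compl_mem
    (h.mem_rowPatterns_or_compl_mem S)
  have hsauer : #(rowPatterns S) ≤ ∑ i ∈ Iic (VCdim S), (Fintype.card C).choose i :=
    calc #(rowPatterns S) ≤ #(rowPatterns S).shatterer := card_le_card_shatterer _
      _ ≤ ∑ i ∈ Iic (rowPatterns S).vcDim, (Fintype.card C).choose i :=
        card_shatterer_le_sum_vcDim
      _ ≤ ∑ i ∈ Iic (VCdim S), (Fintype.card C).choose i :=
        sum_le_sum_of_subset (Iic_subset_Iic.2 (vcDim_rowPatterns_le_vcdim S))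
  have := Nat.two_mul_sum_choose_lt_two_pow (n := Fintype.card C) (d := VCdim S) (by omega)
  omega

end RowPatterns

theorem AntipodallyShattered.card_le_two_mul_vcdim_add_one [Finite C] {T : Finset C}
    (h : AntipodallyShattered S T) : #T ≤ 2 * VCdim S + 1 := by
  classical
  have hT : AntipodallyShattered (S.submatrix id (Function.Embedding.subtype (· ∈ T))) univ :=
    AntipodallyShattered.submatrix_of_map S (by rwa [univ_eq_attach, attach_map_val])
  calc #T = Fintype.card T := (Fintype.card_coe T).symm
    _ ≤ 2 * VCdim (S.submatrix id (Function.Embedding.subtype (· ∈ T))) + 1 :=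
      hT.card_le_two_mul_vcdim_add_one_of_univ
    _ ≤ 2 * VCdim S + 1 := by grw [vcdim_submatrix_le]

end SignMatrix

theorem vcdim_le_dualSignRank_le_two_mul_vcdim_add_one_general
    (R C : ℕ) (S : Matrix (Fin R) (Fin C) ℝ) :
    VCdim S ≤ dualSignRank S ∧ dualSignRank S ≤ 2 * VCdim S + 1 :=
  ⟨vcdim_le_dualSignRank S, csSup_le' fun _ ⟨_, hT, h⟩ => hT ▸ h.card_le_two_mul_vcdim_add_one S⟩

/-- `VC(S) ≤ dual-sign-rank(S) ≤ 2 VC(S) + 1` for every sign matrix `S`. -/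
theorem vcdim_le_dualSignRank_le_two_mul_vcdim_add_one
    (R C : ℕ) (S : Matrix (Fin R) (Fin C) ℝ) (hS : IsSignMatrix S) :
    VCdim S ≤ dualSignRank S ∧ dualSignRank S ≤ 2 * VCdim S + 1 :=
  vcdim_le_dualSignRank_le_two_mul_vcdim_add_one_general R C S
end

section
/- If a sign matrix M has VC dimension at most one, then the sign rank of M is at most 3. -/
/-- The sign rank of a sign matrix `S`: the minimum rank of a real matrix `M` (with no zero
entries) such that `M i j * S i j > 0` for all `i, j`. -/
noncomputable def signRank {R C : Type*} [Fintype R] [Fintype C]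
    (S : Matrix R C ℝ) : ℕ :=
  sInf {k | ∃ M : Matrix R C ℝ, (∀ i j, 0 < M i j * S i j) ∧ M.rank = k}


noncomputable def clamp01 (x : ℝ) : ℝ := max (min x 1) 0

lemma clamp01_lt_iff {t a : ℝ} (h0 : 0 < t) (h1 : t < 1) : clamp01 a < t ↔ a < t := by
  unfold clamp01
  constructor
  · intro h
    by_contra hc
    push_neg at hc
    have : t ≤ max (min a 1) 0 := le_trans (le_min hc h1.le) (le_max_left _ _)
    linarith
  · intro h
    have h2 : max (min a 1) 0 ≤ max a 0 := max_le (le_trans (min_le_left _ _) (le_max_left _ _)) (le_max_right _ _)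
    have h3 : max a 0 < t := max_lt h h0
    linarith

lemma lt_clamp01_iff {t b : ℝ} (h0 : 0 < t) (h1 : t < 1) : t < clamp01 b ↔ t < b := by
  unfold clamp01
  constructor
  · intro h
    rcases lt_max_iff.mp h with h' | h'
    · exact lt_of_lt_of_le h' (min_le_left _ _)
    · linarith
  · intro h
    exact lt_of_lt_of_le (lt_min h h1) (le_max_left _ _)

lemma clamp01_cases (x : ℝ) : clamp01 x = 0 ∨ clamp01 x = 1 ∨ clamp01 x = x := by
  unfold clamp01
  rcases le_total x 0 with h | h
  · left; rw [min_eq_left (by linarith), max_eq_right h]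
  · rcases le_total 1 x with h' | h'
    · right; left; rw [min_eq_right h', max_eq_left (by norm_num)]
    · right; right; rw [min_eq_left h', max_eq_left h]

lemma clamp01_mem (x : ℝ) : 0 ≤ clamp01 x ∧ clamp01 x ≤ 1 :=
  ⟨le_max_right _ _, max_le (min_le_right _ _) (by norm_num)⟩

/-- Laminar families of finsets can be represented by open intervals on the line. -/
lemma exists_interval_rep {α : Type*} [DecidableEq α] (n : ℕ) :
    ∀ (F : Finset (Finset α)) (U : Finset α), F.card ≤ n →
    (∀ Q ∈ F, Q ⊆ U) →
    (∀ Q ∈ F, ∀ Q' ∈ F, Q ⊆ Q' ∨ Q' ⊆ Q ∨ Disjoint Q Q') →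
    ∃ f : α → ℝ, (∀ r ∈ U, 0 < f r ∧ f r < 1) ∧
      ∀ Q ∈ F, ∃ a b : ℝ, (∀ r ∈ U, f r ≠ a ∧ f r ≠ b) ∧
        ∀ r ∈ U, (r ∈ Q ↔ a < f r ∧ f r < b) := by
  induction n with
  | zero =>
    intro F U hcard _ _
    have hF : F = ∅ := Finset.card_eq_zero.mp (Nat.le_zero.mp hcard)
    subst hF
    exact ⟨fun _ => 1/2, fun r _ => by norm_num, by simp⟩
  | succ n ih =>
    intro F U hcard hsub hlam
    rcases F.eq_empty_or_nonempty with rfl | hne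
    · exact ⟨fun _ => 1/2, fun r _ => by norm_num, by simp⟩
    obtain ⟨P, hP, hmax⟩ := F.exists_max_image Finset.card hne
    classical
    set F1 := (F.erase P).filter (fun Q => Q ⊆ P) with hF1
    set F2 := (F.erase P).filter (fun Q => ¬ Q ⊆ P) with hF2
    have hceF : (F.erase P).card ≤ n := by
      have := Finset.card_erase_of_mem hP
      have hpos : 0 < F.card := Finset.card_pos.mpr hne
      omega
    have hF1card : F1.card ≤ n := le_trans (Finset.card_filter_le _ _) hceF
    have hF2card : F2.card ≤ n := le_trans (Finset.card_filter_le _ _) hceF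
    have hF2disj : ∀ Q ∈ F2, Disjoint Q P := by
      intro Q hQ
      rw [hF2, Finset.mem_filter] at hQ
      obtain ⟨hQe, hQns⟩ := hQ
      have hQF : Q ∈ F := Finset.mem_of_mem_erase hQe
      rcases hlam Q hQF P hP with h | h | h
      · exact absurd h hQns
      · have : P = Q := Finset.eq_of_subset_of_card_le h (hmax Q hQF)
        exact absurd this.symm (Finset.ne_of_mem_erase hQe)
      · exact h
    obtain ⟨f1, hf1U, hf1⟩ := ih F1 P hF1card
      (fun Q hQ => (Finset.mem_filter.mp hQ).2)
      (fun Q hQ Q' hQ' => hlam Q (Finset.mem_of_mem_erase (Finset.mem_filter.mp hQ).1)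
        Q' (Finset.mem_of_mem_erase (Finset.mem_filter.mp hQ').1))
    obtain ⟨f2, hf2U, hf2⟩ := ih F2 (U \ P) hF2card
      (fun Q hQ => Finset.subset_sdiff.mpr
        ⟨hsub Q (Finset.mem_of_mem_erase (Finset.mem_filter.mp hQ).1), hF2disj Q hQ⟩)
      (fun Q hQ Q' hQ' => hlam Q (Finset.mem_of_mem_erase (Finset.mem_filter.mp hQ).1)
        Q' (Finset.mem_of_mem_erase (Finset.mem_filter.mp hQ').1))
    refine ⟨fun r => if r ∈ P then f1 r / 3 else 2/3 + f2 r / 3, ?_, ?_⟩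
    · intro r hr
      by_cases hrP : r ∈ P
      · obtain ⟨h0, h1⟩ := hf1U r hrP
        simp only [hrP, if_true]
        constructor <;> linarith
      · obtain ⟨h0, h1⟩ := hf2U r (Finset.mem_sdiff.mpr ⟨hr, hrP⟩)
        simp only [hrP, if_false]
        constructor <;> linarith
    · intro Q hQ
      by_cases hQP : Q = P
      · subst hQP
        refine ⟨-1, 1/2, ?_, ?_⟩
        · intro r hr
          by_cases hrP : r ∈ Q
          · obtain ⟨h0, h1⟩ := hf1U r hrP
            simp only [hrP, if_true]
            constructor <;> intro h <;> linarith
          · obtain ⟨h0, h1⟩ := hf2U r (Finset.mem_sdiff.mpr ⟨hr, hrP⟩)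
            simp only [hrP, if_false]
            constructor <;> intro h <;> linarith
        · intro r hr
          by_cases hrP : r ∈ Q
          · obtain ⟨h0, h1⟩ := hf1U r hrP
            simp only [hrP, if_true]
            constructor
            · intro _; constructor <;> linarith
            · intro _; trivial
          · obtain ⟨h0, h1⟩ := hf2U r (Finset.mem_sdiff.mpr ⟨hr, hrP⟩)
            simp only [hrP, if_false]
            constructor
            · intro h; exact h.elim
            · intro ⟨_, h⟩; exfalso; linarith
      · have hQe : Q ∈ F.erase P := Finset.mem_erase.mpr ⟨hQP, hQ⟩
        by_cases hQs : Q ⊆ P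
        · -- Q ∈ F1
          have hQ1 : Q ∈ F1 := Finset.mem_filter.mpr ⟨hQe, hQs⟩
          obtain ⟨a1, b1, hne1, hiff1⟩ := hf1 Q hQ1
          refine ⟨clamp01 a1 / 3, clamp01 b1 / 3, ?_, ?_⟩
          · intro r hr
            by_cases hrP : r ∈ P
            · obtain ⟨h0, h1⟩ := hf1U r hrP
              obtain ⟨hna, hnb⟩ := hne1 r hrP
              simp only [hrP, if_true]
              constructor
              · intro h
                have h3 : f1 r = clamp01 a1 := by linarith
                rcases clamp01_cases a1 with hc | hc | hc <;> rw [hc] at h3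
                · linarith
                · linarith
                · exact hna h3
              · intro h
                have h3 : f1 r = clamp01 b1 := by linarith
                rcases clamp01_cases b1 with hc | hc | hc <;> rw [hc] at h3
                · linarith
                · linarith
                · exact hnb h3
            · obtain ⟨h0, h1⟩ := hf2U r (Finset.mem_sdiff.mpr ⟨hr, hrP⟩)
              obtain ⟨hca, hca'⟩ := clamp01_mem a1
              obtain ⟨hcb, hcb'⟩ := clamp01_mem b1
              simp only [hrP, if_false]
              constructor <;> intro h <;> linarith
          · intro r hr
            by_cases hrP : r ∈ P
            · obtain ⟨h0, h1⟩ := hf1U r hrP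
              simp only [hrP, if_true]
              rw [hiff1 r hrP, ← clamp01_lt_iff h0 h1, ← lt_clamp01_iff h0 h1]
              constructor
              · intro ⟨x, y⟩; constructor <;> linarith
              · intro ⟨x, y⟩; constructor <;> linarith
            · obtain ⟨h0, h1⟩ := hf2U r (Finset.mem_sdiff.mpr ⟨hr, hrP⟩)
              obtain ⟨hcb, hcb'⟩ := clamp01_mem b1
              simp only [hrP, if_false]
              constructor
              · intro h; exact absurd (hQs h) hrP
              · intro ⟨_, h⟩; exfalso; linarith
        · -- Q ∈ F2
          have hQ2 : Q ∈ F2 := Finset.mem_filter.mpr ⟨hQe, hQs⟩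
          have hQdisj := hF2disj Q hQ2
          obtain ⟨a2, b2, hne2, hiff2⟩ := hf2 Q hQ2
          refine ⟨2/3 + clamp01 a2 / 3, 2/3 + clamp01 b2 / 3, ?_, ?_⟩
          · intro r hr
            by_cases hrP : r ∈ P
            · obtain ⟨h0, h1⟩ := hf1U r hrP
              obtain ⟨hca, hca'⟩ := clamp01_mem a2
              obtain ⟨hcb, hcb'⟩ := clamp01_mem b2
              simp only [hrP, if_true]
              constructor <;> intro h <;> linarith
            · have hrU2 : r ∈ U \ P := Finset.mem_sdiff.mpr ⟨hr, hrP⟩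
              obtain ⟨h0, h1⟩ := hf2U r hrU2
              obtain ⟨hna, hnb⟩ := hne2 r hrU2
              simp only [hrP, if_false]
              constructor
              · intro h
                have h3 : f2 r = clamp01 a2 := by linarith
                rcases clamp01_cases a2 with hc | hc | hc <;> rw [hc] at h3
                · linarith
                · linarith
                · exact hna h3
              · intro h
                have h3 : f2 r = clamp01 b2 := by linarith
                rcases clamp01_cases b2 with hc | hc | hc <;> rw [hc] at h3
                · linarith
                · linarith
                · exact hnb h3
          · intro r hr
            by_cases hrP : r ∈ P
            · obtain ⟨h0, h1⟩ := hf1U r hrP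
              obtain ⟨hca, hca'⟩ := clamp01_mem a2
              simp only [hrP, if_true]
              constructor
              · intro h
                exact absurd hrP (Finset.disjoint_left.mp hQdisj h)
              · intro ⟨h, _⟩; exfalso; linarith
            · have hrU2 : r ∈ U \ P := Finset.mem_sdiff.mpr ⟨hr, hrP⟩
              obtain ⟨h0, h1⟩ := hf2U r hrU2
              simp only [hrP, if_false]
              rw [hiff2 r hrU2, ← clamp01_lt_iff h0 h1, ← lt_clamp01_iff h0 h1]
              constructor
              · intro ⟨x, y⟩; constructor <;> linarith
              · intro ⟨x, y⟩; constructor <;> linarith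

lemma sign_eq_or_eq_neg {x y : ℝ} (hx : x = 1 ∨ x = -1) (hy : y = 1 ∨ y = -1) :
    x = y ∨ x = -y := by
  rcases hx with h | h <;> rcases hy with h' | h' <;> subst h <;> subst h' <;> norm_num

lemma sign_eq_neg_of_ne {x y : ℝ} (hx : x = 1 ∨ x = -1) (hy : y = 1 ∨ y = -1)
    (h : x ≠ y) : x = -y := (sign_eq_or_eq_neg hx hy).resolve_left h

/-- a sign matrix of VC dimension at most one has sign rank at most `3`. -/
theorem signRank_le_three_of_vcdim_le_one
    (R C : ℕ) (M : Matrix (Fin R) (Fin C) ℝ) (hM : IsSignMatrix M)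
    (hVC : VCdim M ≤ 1) :
    signRank M ≤ 3 := by
  classical
  -- it suffices to exhibit a sign-consistent matrix of rank ≤ 3
  suffices h : ∃ N : Matrix (Fin R) (Fin C) ℝ, (∀ i j, 0 < N i j * M i j) ∧ N.rank ≤ 3 by
    obtain ⟨N, hN1, hN2⟩ := h
    exact le_trans (Nat.sInf_le ⟨N, hN1, rfl⟩) hN2
  rcases Nat.eq_zero_or_pos R with hR | hR
  · subst hR
    refine ⟨M, fun i j => i.elim0, ?_⟩
    calc M.rank ≤ Fintype.card (Fin 0) := Matrix.rank_le_card_height M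
    _ ≤ 3 := by simp
  -- now R > 0; normalize supports against row r0
  set r0 : Fin R := ⟨0, hR⟩ with hr0
  -- VC dimension ≤ 1 means no two distinct columns are shattered
  have hbdd : BddAbove {k | ∃ T : Finset (Fin C), T.card = k ∧ Shattered M T} := by
    refine ⟨C, fun k hk => ?_⟩
    obtain ⟨T, hT, _⟩ := hk
    rw [← hT]
    calc T.card ≤ Fintype.card (Fin C) := Finset.card_le_univ T
    _ = C := Fintype.card_fin C
  have hpair : ∀ c c' : Fin C, c ≠ c' →
      ∃ ε δ : ℝ, (ε = 1 ∨ ε = -1) ∧ (δ = 1 ∨ δ = -1) ∧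
        ∀ r, ¬(M r c = ε ∧ M r c' = δ) := by
    intro c c' hcc
    have hns : ¬ Shattered M ({c, c'} : Finset (Fin C)) := by
      intro hs
      have h2 : 2 ≤ VCdim M :=
        le_csSup hbdd ⟨{c, c'}, Finset.card_pair hcc, hs⟩
      omega
    unfold Shattered at hns
    push_neg at hns
    obtain ⟨v, hv, hvr⟩ := hns
    refine ⟨v c, v c', hv c (by simp), hv c' (by simp), fun r hcon => ?_⟩
    obtain ⟨x, hx, hnx⟩ := hvr r
    rcases Finset.mem_insert.mp hx with h | h
    · subst h; exact hnx hcon.1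
    · rw [Finset.mem_singleton] at h; subst h; exact hnx hcon.2
  -- the normalized supports
  set P : Fin C → Finset (Fin R) :=
    fun c => Finset.univ.filter (fun r => M r c = -(M r0 c)) with hP
  have hmemP : ∀ c r, r ∈ P c ↔ M r c = -(M r0 c) := by
    intro c r; rw [hP]; simp
  have hnotmemP : ∀ c r, r ∉ P c ↔ M r c = M r0 c := by
    intro c r
    rw [hmemP]
    constructor
    · intro h
      by_contra h2
      exact h (sign_eq_neg_of_ne (hM r c) (hM r0 c) h2)
    · intro h h2
      rw [h] at h2
      rcases hM r0 c with h3 | h3 <;> rw [h3] at h2 <;> norm_num at h2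
  -- laminarity
  have hlamP : ∀ c c' : Fin C, P c ⊆ P c' ∨ P c' ⊆ P c ∨ Disjoint (P c) (P c') := by
    intro c c'
    by_cases hcc : c = c'
    · subst hcc; exact Or.inl subset_rfl
    obtain ⟨ε, δ, hε, hδ, hmiss⟩ := hpair c c' hcc
    rcases sign_eq_or_eq_neg hε (hM r0 c) with he | he <;>
      rcases sign_eq_or_eq_neg hδ (hM r0 c') with hd | hd
    · -- ε = σ c, δ = σ c' : contradiction with row r0
      exact absurd ⟨he.symm, hd.symm⟩ (hmiss r0)
    · -- ε = σ c, δ = -σ c' : P c' ⊆ P c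
      refine Or.inr (Or.inl (fun r hr => ?_))
      rw [hmemP] at hr
      have h1 : M r c ≠ ε := by
        intro h
        exact hmiss r ⟨h, by rw [hr, hd]⟩
      rw [he] at h1
      rw [hmemP]
      exact sign_eq_neg_of_ne (hM r c) (hM r0 c) h1
    · -- ε = -σ c, δ = σ c' : P c ⊆ P c'
      refine Or.inl (fun r hr => ?_)
      rw [hmemP] at hr
      have h1 : M r c' ≠ δ := by
        intro h
        exact hmiss r ⟨by rw [hr, he], h⟩
      rw [hd] at h1
      rw [hmemP]
      exact sign_eq_neg_of_ne (hM r c') (hM r0 c') h1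
    · -- both flipped : disjoint
      refine Or.inr (Or.inr (Finset.disjoint_left.mpr (fun r hr hr' => ?_)))
      rw [hmemP] at hr hr'
      exact hmiss r ⟨by rw [hr, he], by rw [hr', hd]⟩
  -- build the interval representation
  set F : Finset (Finset (Fin R)) := Finset.univ.image P with hFdef
  obtain ⟨f, hfU, hint⟩ := exists_interval_rep F.card F Finset.univ le_rfl
    (fun Q _ => Q.subset_univ)
    (by
      intro Q hQ Q' hQ'
      obtain ⟨c, _, rfl⟩ := Finset.mem_image.mp hQ
      obtain ⟨c', _, rfl⟩ := Finset.mem_image.mp hQ'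
      exact hlamP c c')
  have hPF : ∀ c, P c ∈ F := fun c => Finset.mem_image_of_mem P (Finset.mem_univ c)
  choose a b hne hiff using fun c => hint (P c) (hPF c)
  -- fix up degenerate intervals
  set a' : Fin C → ℝ := fun c => if a c < b c then a c else -2 with ha'
  set b' : Fin C → ℝ := fun c => if a c < b c then b c else -1 with hb'
  have hab : ∀ c, a' c < b' c := by
    intro c
    rw [ha', hb']
    by_cases h : a c < b c <;> simp [h]
  have hfne : ∀ c r, f r ≠ a' c ∧ f r ≠ b' c := by
    intro c r
    have h0 := (hfU r (Finset.mem_univ r)).1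
    rw [ha', hb']
    by_cases h : a c < b c <;> simp only [h, if_true, if_false]
    · exact hne c r (Finset.mem_univ r)
    · constructor <;> intro h2 <;> linarith
  have hmem' : ∀ c r, r ∈ P c ↔ a' c < f r ∧ f r < b' c := by
    intro c r
    have h0 := (hfU r (Finset.mem_univ r)).1
    rw [ha', hb']
    by_cases h : a c < b c <;> simp only [h, if_true, if_false]
    · exact hiff c r (Finset.mem_univ r)
    · constructor
      · intro hr
        obtain ⟨h1, h2⟩ := (hiff c r (Finset.mem_univ r)).mp hr
        exact absurd (lt_trans h1 h2) h
      · intro ⟨h1, h2⟩; exfalso; linarith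
  -- the rank-3 matrix
  set N : Matrix (Fin R) (Fin C) ℝ :=
    Matrix.of (fun r c => -(M r0 c) * ((f r - a' c) * (b' c - f r))) with hNdef
  refine ⟨N, ?_, ?_⟩
  · intro r c
    have hNval : N r c = -(M r0 c) * ((f r - a' c) * (b' c - f r)) := rfl
    have hσ : M r0 c * M r0 c = 1 := by
      rcases hM r0 c with h | h <;> rw [h] <;> norm_num
    by_cases hr : r ∈ P c
    · have hg : 0 < (f r - a' c) * (b' c - f r) := by
        obtain ⟨h1, h2⟩ := (hmem' c r).mp hr
        apply mul_pos <;> linarith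
      have hMrc : M r c = -(M r0 c) := (hmemP c r).mp hr
      have : N r c * M r c = (M r0 c * M r0 c) * ((f r - a' c) * (b' c - f r)) := by
        rw [hNval, hMrc]; ring
      rw [this, hσ, one_mul]; exact hg
    · have hg : (f r - a' c) * (b' c - f r) < 0 := by
        have hnot := (hmem' c r).not.mp hr
        obtain ⟨hna, hnb⟩ := hfne c r
        rcases lt_trichotomy (f r) (a' c) with h1 | h1 | h1
        · have h2 : 0 < b' c - f r := by have := hab c; linarith
          nlinarith
        · exact absurd h1 hna
        · have h2 : ¬ f r < b' c := fun h2 => hnot ⟨h1, h2⟩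
          push_neg at h2
          have h3 : b' c < f r := lt_of_le_of_ne h2 (Ne.symm hnb)
          nlinarith
      have hMrc : M r c = M r0 c := (hnotmemP c r).mp hr
      have : N r c * M r c = -((M r0 c * M r0 c) * ((f r - a' c) * (b' c - f r))) := by
        rw [hNval, hMrc]; ring
      rw [this, hσ, one_mul]; linarith
  · -- rank ≤ 3 via factorization through (1, t, t²)
    set A : Matrix (Fin R) (Fin 3) ℝ :=
      Matrix.of (fun r i => ![(1 : ℝ), f r, f r ^ 2] i) with hA
    set B : Matrix (Fin 3) (Fin C) ℝ :=
      Matrix.of (fun i c => ![(-(M r0 c)) * (-(a' c * b' c)),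
        (-(M r0 c)) * (a' c + b' c), (-(M r0 c)) * (-1)] i) with hB
    have hfact : N = A * B := by
      ext r c
      rw [hNdef, hA, hB]
      simp [Matrix.mul_apply, Fin.sum_univ_three]
      ring
    rw [hfact]
    calc (A * B).rank ≤ A.rank := Matrix.rank_mul_le_left A B
    _ ≤ Fintype.card (Fin 3) := Matrix.rank_le_card_width A
    _ = 3 := by simp
end

section
/- For every N ≥ 4, the N×N signed identity matrix (the matrix with +1 on the diagonal and −1 off the diagonal) has VC dimension equal to one and sign rank equal to 3. -/
/-!
A row of the signed identity has a single `+1`, so the all-ones pattern on two columns never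
occurs, while a single column is shattered by its own row and by any other row.

If `M` has the sign pattern of the signed identity and rank at most `2`, then three of its rows
satisfy a nontrivial linear relation, in which (up to an overall sign) at most one coefficient is
negative. Reading the relation in the column of that coefficient shows that it is nonnegative
too, and reading it in a fourth column, where every term is then nonpositive, shows that all
coefficients vanish. Conversely, `1 - 2 (x i - x j) ^ 2` for distinct integers `x i` has the
sign pattern and expands into three rank-one terms.
-/

open Matrix Finset Function

def signedIdentity (ι : Type*) [DecidableEq ι] : Matrix ι ι ℝ :=
  of fun i j => if i = j then 1 else -1

theorem signRank_le_rank {R C : Type*} [Fintype R] [Fintype C] {S M : Matrix R C ℝ}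
    (hM : ∀ i j, 0 < M i j * S i j) : signRank S ≤ M.rank :=
  Nat.sInf_le ⟨M, hM, rfl⟩

theorem le_signRank {R C : Type*} [Fintype R] [Fintype C] {S M : Matrix R C ℝ} {n : ℕ}
    (hM : ∀ i j, 0 < M i j * S i j)
    (hn : ∀ M' : Matrix R C ℝ, (∀ i j, 0 < M' i j * S i j) → n ≤ M'.rank) : n ≤ signRank S :=
  le_csInf ⟨M.rank, M, hM, rfl⟩ fun _ ⟨M', hM', hk⟩ => hk ▸ hn M' hM'

section

variable {ι : Type*} [DecidableEq ι]

theorem shattered_signedIdentity_singleton [Nontrivial ι] (c : ι) :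
    Shattered (signedIdentity ι) {c} := by
  intro v hv
  obtain ⟨r, hr⟩ := exists_ne c
  rcases hv c (mem_singleton_self c) with h | h
  · exact ⟨c, by simp [signedIdentity, h]⟩
  · exact ⟨r, by simp [signedIdentity, h, hr]⟩

theorem signedIdentity_apply_eq_one_iff {i j : ι} : signedIdentity ι i j = 1 ↔ i = j := by
  by_cases h : i = j <;> norm_num [signedIdentity, h]

theorem card_le_one_of_shattered_signedIdentity {T : Finset ι}
    (hT : Shattered (signedIdentity ι) T) : #T ≤ 1 := by
  obtain ⟨r, hr⟩ := hT 1 fun _ _ => Or.inl rfl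
  refine card_le_one.2 fun a ha b hb => ?_
  rw [← signedIdentity_apply_eq_one_iff.1 (hr a ha), signedIdentity_apply_eq_one_iff.1 (hr b hb)]

theorem vcdim_signedIdentity [Nontrivial ι] : VCdim (signedIdentity ι) = 1 := by
  obtain ⟨c, -⟩ := exists_pair_ne ι
  refine IsGreatest.csSup_eq ⟨⟨{c}, card_singleton c, shattered_signedIdentity_singleton c⟩, ?_⟩
  rintro k ⟨T, rfl, hT⟩
  exact card_le_one_of_shattered_signedIdentity hT

theorem forall_mul_signedIdentity_pos_iff {M : Matrix ι ι ℝ} :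
    (∀ i j, 0 < M i j * signedIdentity ι i j) ↔ (∀ i, 0 < M i i) ∧ ∀ i j, i ≠ j → M i j < 0 := by
  simp only [signedIdentity, of_apply]
  refine ⟨fun h => ⟨fun i => by simpa using h i i, fun i j hij => by simpa [hij] using h i j⟩,
    fun ⟨hdiag, hoff⟩ i j => ?_⟩
  by_cases hij : i = j
  · subst hij; simpa using hdiag i
  · simpa [hij] using hoff i j hij

end

section

variable {ι : Type*} {M : Matrix ι ι ℝ}

theorem eq_zero_of_sum_smul_row_eq_zero (hdiag : ∀ i, 0 < M i i)
    (hoff : ∀ i j, i ≠ j → M i j < 0) {κ : Type*} [Fintype κ] {f : κ → ι} (hf : Injective f)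
    {t : ι} (hft : ∀ k, f k ≠ t) {g : κ → ℝ} (hg : ∑ k, g k • M (f k) = 0) {s : κ}
    (hs : ∀ k ≠ s, 0 ≤ g k) : g = 0 := by
  have hcol : ∀ j, ∑ k, g k * M (f k) j = 0 := fun j => by
    simpa using congrFun hg j
  have hgs : 0 ≤ g s := by
    by_contra! hneg
    have hterm : ∀ k ∈ univ, g k * M (f k) (f s) ≤ 0 := fun k _ => by
      rcases eq_or_ne k s with rfl | hk
      · exact (mul_neg_of_neg_of_pos hneg (hdiag _)).le
      · exact mul_nonpos_of_nonneg_of_nonpos (hs k hk) (hoff _ _ (hf.ne hk)).le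
    have := (sum_eq_zero_iff_of_nonpos hterm).1 (hcol (f s)) s (mem_univ s)
    exact (mul_neg_of_neg_of_pos hneg (hdiag _)).ne this
  have hnonneg : ∀ k, 0 ≤ g k := fun k => by
    rcases eq_or_ne k s with rfl | hk
    exacts [hgs, hs k hk]
  have hterm : ∀ k ∈ univ, g k * M (f k) t ≤ 0 := fun k _ =>
    mul_nonpos_of_nonneg_of_nonpos (hnonneg k) (hoff _ _ (hft k)).le
  funext k
  have := (sum_eq_zero_iff_of_nonpos hterm).1 (hcol t) k (mem_univ k)
  exact (mul_eq_zero.1 this).resolve_right (hoff _ _ (hft k)).ne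

theorem exists_forall_ne_nonneg_or_forall_ne_nonpos (g : Fin 3 → ℝ) :
    ∃ s, (∀ k ≠ s, 0 ≤ g k) ∨ ∀ k ≠ s, g k ≤ 0 := by
  rcases le_total 0 (g 0) with h0 | h0 <;> rcases le_total 0 (g 1) with h1 | h1 <;>
    rcases le_total 0 (g 2) with h2 | h2
  all_goals first
    | (refine ⟨0, Or.inl ?_⟩; simp [Fin.forall_fin_succ, *]; done)
    | (refine ⟨1, Or.inl ?_⟩; simp [Fin.forall_fin_succ, *]; done)
    | (refine ⟨2, Or.inl ?_⟩; simp [Fin.forall_fin_succ, *]; done)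
    | (refine ⟨0, Or.inr ?_⟩; simp [Fin.forall_fin_succ, *]; done)
    | (refine ⟨1, Or.inr ?_⟩; simp [Fin.forall_fin_succ, *]; done)
    | (refine ⟨2, Or.inr ?_⟩; simp [Fin.forall_fin_succ, *])

theorem three_le_rank_of_sign_pattern [Fintype ι] (hι : 4 ≤ Fintype.card ι)
    (hdiag : ∀ i, 0 < M i i) (hoff : ∀ i j, i ≠ j → M i j < 0) : 3 ≤ M.rank := by
  by_contra! hlt
  obtain ⟨e⟩ : Nonempty (Fin 4 ↪ ι) := Function.Embedding.nonempty_of_card_le (by simpa)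
  set f : Fin 3 → ι := e ∘ Fin.castSucc
  have hf : Injective f := e.injective.comp (Fin.castSucc_injective 3)
  have hft : ∀ k, f k ≠ e (Fin.last 3) := fun k hk =>
    Fin.castSucc_ne_last k (e.injective hk)
  have hdep : ¬LinearIndependent ℝ fun k => M (f k) := fun hli => by
    have := (LinearIndependent.rank_matrix (M := M.submatrix f id) hli).symm.trans_le
      (M.rank_submatrix_le f id)
    simp only [Fintype.card_fin] at this
    omega
  obtain ⟨g, hg, k, hk⟩ := Fintype.not_linearIndependent_iff.1 hdep
  obtain ⟨s, hs | hs⟩ := exists_forall_ne_nonneg_or_forall_ne_nonpos g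
  · exact hk (congrFun (eq_zero_of_sum_smul_row_eq_zero hdiag hoff hf hft hg hs) k)
  · have := eq_zero_of_sum_smul_row_eq_zero hdiag hoff hf hft (g := -g)
      (by simpa [neg_smul] using hg) (by simpa using hs)
    exact hk (by simpa using congrFun this k)

end

theorem one_le_sq_sub_of_ne {a b : ℕ} (h : a ≠ b) : 1 ≤ ((a : ℝ) - b) ^ 2 := by
  rcases h.lt_or_gt with h | h
  · have : (a : ℝ) + 1 ≤ b := by exact_mod_cast h
    nlinarith
  · have : (b : ℝ) + 1 ≤ a := by exact_mod_cast h
    nlinarith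

theorem exists_rank_le_three_mul_signedIdentity_pos (ι : Type*) [Fintype ι] [DecidableEq ι] :
    ∃ M : Matrix ι ι ℝ, (∀ i j, 0 < M i j * signedIdentity ι i j) ∧ M.rank ≤ 3 := by
  let x : ι → ℝ := fun i => (Fintype.equivFin ι i : ℕ)
  let A : Matrix ι (Fin 3) ℝ := of fun i => ![1 - 2 * x i ^ 2, 4 * x i, -2]
  let B : Matrix (Fin 3) ι ℝ := of fun k j => ![1, x j, x j ^ 2] k
  have hAB : ∀ i j, (A * B) i j = 1 - 2 * (x i - x j) ^ 2 := fun i j => by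
    simp only [A, B, mul_apply, of_apply, Fin.sum_univ_three, cons_val_zero, cons_val_one,
      Matrix.cons_val]
    ring
  have hsep : ∀ i j, i ≠ j → 1 ≤ (x i - x j) ^ 2 := fun i j hij =>
    one_le_sq_sub_of_ne (Fin.val_injective.ne ((Fintype.equivFin ι).injective.ne hij))
  refine ⟨A * B, forall_mul_signedIdentity_pos_iff.2 ⟨fun i => ?_, fun i j hij => ?_⟩, ?_⟩
  · simp [hAB]
  · linarith [hAB i j, hsep i j hij]
  · exact (rank_mul_le_left A B).trans ((rank_le_card_width A).trans (by simp))

theorem signRank_signedIdentity {ι : Type*} [Fintype ι] [DecidableEq ι]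
    (hι : 4 ≤ Fintype.card ι) : signRank (signedIdentity ι) = 3 := by
  obtain ⟨M, hM, hrank⟩ := exists_rank_le_three_mul_signedIdentity_pos ι
  refine le_antisymm ((signRank_le_rank hM).trans hrank) (le_signRank hM fun M' hM' => ?_)
  obtain ⟨hdiag, hoff⟩ := forall_mul_signedIdentity_pos_iff.1 hM'
  exact three_le_rank_of_sign_pattern hι hdiag hoff

/-- for `N ≥ 4`, the `N × N` signed identity matrix (`+1` on the diagonal, `-1`
off the diagonal) has VC dimension one and sign rank `3`. -/
theorem signedIdentity_vcdim_eq_one_and_signRank_eq_three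
    (N : ℕ) (hN : 4 ≤ N)
    (S : Matrix (Fin N) (Fin N) ℝ)
    (hS : ∀ i j, S i j = if i = j then 1 else -1) :
    VCdim S = 1 ∧ signRank S = 3 := by
  obtain rfl : S = signedIdentity (Fin N) := Matrix.ext hS
  have : Nontrivial (Fin N) := Fin.nontrivial_iff_two_le.2 (by omega)
  exact ⟨vcdim_signedIdentity, signRank_signedIdentity (by simpa using hN)⟩
end

section
/- Let M be an R×C sign matrix with VC dimension one such that no two rows of M are equal and every column of M contains both the value +1 and the value −1. Then there exist a column c₀ and a row r₀ such that M_{r₀,c₀} ≠ M_{r,c₀} for every row r ≠ r₀. -/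
/-- if `M` is a sign matrix of VC dimension one, with pairwise distinct rows,
in which every column contains both values `+1` and `-1`, then there are a column `c₀` and a
row `r₀` such that `M r₀ c₀ ≠ M r c₀` for every row `r ≠ r₀`. -/
theorem exists_special_row_and_column
    (R C : ℕ) (M : Matrix (Fin R) (Fin C) ℝ) (hM : IsSignMatrix M)
    (hVC : VCdim M = 1)
    (hrows : ∀ r r' : Fin R, (∀ c, M r c = M r' c) → r = r')
    (hcols : ∀ c : Fin C, (∃ r, M r c = 1) ∧ (∃ r, M r c = -1)) :
    ∃ (c₀ : Fin C) (r₀ : Fin R), ∀ r : Fin R, r ≠ r₀ → M r c₀ ≠ M r₀ c₀ := by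
  classical
  set S : Set ℕ := {k | ∃ T : Finset (Fin C), T.card = k ∧ Shattered M T} with hS
  have bddS : BddAbove S := by
    refine ⟨C, ?_⟩
    rintro k ⟨T, rfl, -⟩
    simpa using T.card_le_univ
  have hSne : S.Nonempty := by
    by_contra h
    rw [Set.not_nonempty_iff_eq_empty] at h
    rw [VCdim, ← hS, h] at hVC
    simp at hVC
  have hone : 1 ∈ S := by
    have := Nat.sSup_mem hSne bddS
    rwa [show sSup S = 1 from hVC] at this
  obtain ⟨T1, hT1card, -⟩ := hone
  have hT1ne : T1.Nonempty := Finset.card_pos.mp (by omega)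
  obtain ⟨c0, -⟩ := hT1ne
  -- no 2-element set is shattered
  have no2 : ∀ T : Finset (Fin C), T.card = 2 → ¬ Shattered M T := by
    intro T hc hs
    have h2 : (2 : ℕ) ∈ S := ⟨T, hc, hs⟩
    have := le_csSup bddS h2
    rw [show sSup S = 1 from hVC] at this
    omega
  -- sign dichotomy
  have signcase : ∀ (s : ℝ), (s = 1 ∨ s = -1) → ∀ r cc, M r cc = s ∨ M r cc = -s := by
    intro s hs r cc
    rcases hM r cc with h | h <;> rcases hs with rfl | rfl <;> simp [h]
  -- minimization
  set P : ℕ → Prop := fun n => ∃ (c : Fin C) (s : ℝ), (s = 1 ∨ s = -1) ∧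
    (Finset.univ.filter (fun r => M r c = s)).card = n ∧ 0 < n with hP
  have hex : ∃ n, P n := by
    obtain ⟨r1, hr1⟩ := (hcols c0).1
    refine ⟨_, c0, 1, Or.inl rfl, rfl, ?_⟩
    exact Finset.card_pos.mpr ⟨r1, by simp [hr1]⟩
  set m := Nat.find hex with hm
  obtain ⟨c, s, hs, hcard, hpos⟩ := Nat.find_spec hex
  rw [← hm] at hcard hpos
  set A := Finset.univ.filter (fun r => M r c = s) with hA
  by_cases hm1 : m = 1
  · -- A is a singleton {r₀}
    rw [hm1] at hcard
    obtain ⟨r₀, hr₀⟩ := Finset.card_eq_one.mp hcard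
    have hr₀A : r₀ ∈ A := by rw [hr₀]; simp
    have hr₀s : M r₀ c = s := by simpa [hA] using hr₀A
    refine ⟨c, r₀, fun r hr hcontra => ?_⟩
    have hrA : r ∈ A := by simp [hA]; rw [hcontra, hr₀s]
    rw [hr₀] at hrA
    exact hr (by simpa using hrA)
  · -- m ≥ 2 : derive contradiction
    exfalso
    have hm2 : 2 ≤ m := by omega
    have hA2 : 1 < A.card := by omega
    obtain ⟨r1, hr1, r2, hr2, hr12⟩ := Finset.one_lt_card.mp hA2
    have hr1s : M r1 c = s := by simpa [hA] using hr1
    have hr2s : M r2 c = s := by simpa [hA] using hr2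
    have hdiff : ∃ c', M r1 c' ≠ M r2 c' := by
      by_contra h
      push_neg at h
      exact hr12 (hrows r1 r2 h)
    obtain ⟨c', hc'⟩ := hdiff
    have hcc' : c ≠ c' := fun h => hc' (by rw [← h, hr1s, hr2s])
    -- rows in A with both values at c'
    have ha : ∀ t : ℝ, (t = 1 ∨ t = -1) → ∃ r, M r c = s ∧ M r c' = t := by
      intro t ht
      rcases hM r1 c' with h1 | h1
      · rcases ht with rfl | rfl
        · exact ⟨r1, hr1s, h1⟩
        · rcases hM r2 c' with h2 | h2
          · exact absurd (h1.trans h2.symm) hc'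
          · exact ⟨r2, hr2s, h2⟩
      · rcases ht with rfl | rfl
        · rcases hM r2 c' with h2 | h2
          · exact ⟨r2, hr2s, h2⟩
          · exact absurd (h1.trans h2.symm) hc'
        · exact ⟨r1, hr1s, h1⟩
    have hrow : ∀ (v : Fin C → ℝ) (r : Fin R), M r c = v c → M r c' = v c' →
        ∀ x ∈ ({c, c'} : Finset (Fin C)), M r x = v x := by
      intro v r h1 h2 x hx
      rcases Finset.mem_insert.mp hx with h | h
      · rw [h]; exact h1
      · rw [Finset.mem_singleton.mp h]; exact h2
    -- not both values of c' appear outside A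
    have hkey : ∃ t : ℝ, (t = 1 ∨ t = -1) ∧ ∀ r, M r c = -s → M r c' ≠ t := by
      by_contra h
      push_neg at h
      obtain ⟨ra, hra1, hra2⟩ := h 1 (Or.inl rfl)
      obtain ⟨rb, hrb1, hrb2⟩ := h (-1) (Or.inr rfl)
      have hshat : Shattered M {c, c'} := by
        intro v hv
        have hvc := hv c (by simp)
        have hvc' := hv c' (by simp)
        have hvcs : v c = s ∨ v c = -s := by
          rcases hvc with h' | h' <;> rcases hs with rfl | rfl <;> simp [h']
        rcases hvcs with h' | h'
        · obtain ⟨r, hrA, hrc'⟩ := ha (v c') hvc'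
          exact ⟨r, hrow v r (hrA.trans h'.symm) hrc'⟩
        · rcases hvc' with h'' | h''
          · exact ⟨ra, hrow v ra (hra1.trans h'.symm) (hra2.trans h''.symm)⟩
          · exact ⟨rb, hrow v rb (hrb1.trans h'.symm) (hrb2.trans h''.symm)⟩
      have hcard2 : ({c, c'} : Finset (Fin C)).card = 2 := by
        rw [Finset.card_insert_of_notMem (by simpa using hcc'), Finset.card_singleton]
      exact no2 {c, c'} hcard2 hshat
    obtain ⟨t, ht, hnone⟩ := hkey
    set B := Finset.univ.filter (fun r => M r c' = t) with hB
    have hBsub : B ⊆ A := by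
      intro r hrB
      have hrt : M r c' = t := by simpa [hB] using hrB
      rcases signcase s hs r c with h | h
      · simp [hA, h]
      · exact absurd hrt (hnone r h)
    have hBne : 0 < B.card := by
      rcases ht with rfl | rfl
      · obtain ⟨r, hr⟩ := (hcols c').1
        exact Finset.card_pos.mpr ⟨r, by simp [hB, hr]⟩
      · obtain ⟨r, hr⟩ := (hcols c').2
        exact Finset.card_pos.mpr ⟨r, by simp [hB, hr]⟩
    have hwit : ∃ r, r ∈ A ∧ r ∉ B := by
      have hor : M r1 c' ≠ t ∨ M r2 c' ≠ t := by
        by_contra h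
        push_neg at h
        exact hc' (h.1.trans h.2.symm)
      rcases hor with h | h
      · exact ⟨r1, hr1, by simp [hB, h]⟩
      · exact ⟨r2, hr2, by simp [hB, h]⟩
    obtain ⟨rw', hrwA, hrwB⟩ := hwit
    have hlt : B.card < A.card :=
      Finset.card_lt_card ⟨hBsub, fun h => hrwB (h hrwA)⟩
    rw [hcard] at hlt
    exact Nat.find_min hex hlt ⟨c', t, ht, rfl, hBne⟩
end

section
/- Let M be an R×C sign matrix of VC dimension at most one such that no two rows of M are equal. Then there exist points x_r ∈ ℝ² on the unit circle (‖x_r‖ = 1), one for each row r, and for each column c a vector a_c ∈ ℝ² and a scalar b_c ∈ ℝ, such that for every row r and column c one has ⟨a_c, x_r⟩ + b_c ≠ 0 and M_{r,c} = 1 if and only if ⟨a_c, x_r⟩ + b_c > 0. -/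
open scoped RealInnerProductSpace

/-!
Fix a row `r₀`. For each column, the rows in which it disagrees with `r₀` form a family of sets
that is laminar, since three rows witnessing a crossing pair of columns, together with `r₀`,
would shatter that pair. The elements of a finite laminar family can be ranked by naturals so
that each member is the set of elements with rank in some interval `[m, n]`. Send the row of
rank `k` to the point of the unit circle with stereographic parameter `k`; on the circle, the
affine function cutting the chord between the parameters `m - 1/2` and `n + 1/2` is
`(t - (m - 1/2)) (t - (n + 1/2)) / (1 + t²)`, negative exactly on the ranks in `[m, n]`.
Multiplying it by the entry of `r₀` gives the half-plane of the column.
-/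

open Finset

namespace Finset

variable {α : Type*}

def IsLaminar (F : Finset (Finset α)) : Prop :=
  ∀ A ∈ F, ∀ B ∈ F, A ⊆ B ∨ B ⊆ A ∨ Disjoint A B

/-- `A` is an interval of `s` for the preorder on `α` pulled back along `t`. -/
def IsConvexAlong (t : α → ℕ) (s A : Finset α) : Prop :=
  ∀ x ∈ A, ∀ z ∈ A, ∀ y ∈ s, t x ≤ t y → t y ≤ t z → y ∈ A

lemma isConvexAlong_self (t : α → ℕ) (s : Finset α) : IsConvexAlong t s s :=
  fun _ _ _ _ _ hy _ _ => hy

lemma isConvexAlong_empty (t : α → ℕ) (s : Finset α) : IsConvexAlong t s ∅ :=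
  fun _ hx => absurd hx (notMem_empty _)

lemma isConvexAlong_piecewise_of_subset [DecidableEq α] {t₁ t₂ : α → ℕ} {K : ℕ}
    {s A₀ A : Finset α} (hK : ∀ x ∈ A₀, t₁ x < K) (hA : A ⊆ A₀) (h : IsConvexAlong t₁ A₀ A) :
    IsConvexAlong (A₀.piecewise t₁ (K + t₂ ·)) s A := by
  intro x hx z hz y _ hxy hyz
  have hyA₀ : y ∈ A₀ := by
    by_contra hy
    rw [piecewise_eq_of_mem _ _ _ (hA hz), piecewise_eq_of_notMem _ _ _ hy] at hyz
    exact absurd (hK z (hA hz)) (by omega)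
  rw [piecewise_eq_of_mem _ _ _ hyA₀] at hxy hyz
  rw [piecewise_eq_of_mem _ _ _ (hA hx)] at hxy
  rw [piecewise_eq_of_mem _ _ _ (hA hz)] at hyz
  exact h x hx z hz y hyA₀ hxy hyz

lemma isConvexAlong_piecewise_of_disjoint [DecidableEq α] {t₁ t₂ : α → ℕ} {K : ℕ}
    {s A₀ A : Finset α} (hK : ∀ x ∈ A₀, t₁ x < K) (hA : Disjoint A A₀)
    (h : IsConvexAlong t₂ (s \ A₀) A) :
    IsConvexAlong (A₀.piecewise t₁ (K + t₂ ·)) s A := by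
  intro x hx z hz y hy hxy hyz
  have hxA₀ := disjoint_left.1 hA hx
  have hyA₀ : y ∉ A₀ := by
    intro hy
    rw [piecewise_eq_of_notMem _ _ _ hxA₀, piecewise_eq_of_mem _ _ _ hy] at hxy
    exact absurd (hK y hy) (by omega)
  rw [piecewise_eq_of_notMem _ _ _ hyA₀, piecewise_eq_of_notMem _ _ _ hxA₀] at hxy
  rw [piecewise_eq_of_notMem _ _ _ hyA₀,
    piecewise_eq_of_notMem _ _ _ (disjoint_left.1 hA hz)] at hyz
  exact h x hx z hz y (mem_sdiff.2 ⟨hy, hyA₀⟩) (by omega) (by omega)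

/-- Rank a maximal proper member `A₀` of `F` and its complement recursively, then place all of
`A₀` before its complement. -/
theorem IsLaminar.exists_isConvexAlong [DecidableEq α] {s : Finset α} {F : Finset (Finset α)}
    (hF : IsLaminar F) (hFs : ∀ A ∈ F, A ⊆ s) : ∃ t : α → ℕ, ∀ A ∈ F, IsConvexAlong t s A := by
  induction s using Finset.strongInduction generalizing F with
  | H s ih =>
  by_cases hproper : ∃ A ∈ F, A ≠ s ∧ A.Nonempty
  swap
  · push Not at hproper
    refine ⟨0, fun A hA => ?_⟩
    by_cases hAs : A = s
    · exact hAs ▸ isConvexAlong_self 0 s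
    · exact hproper A hA hAs ▸ isConvexAlong_empty 0 s
  obtain ⟨A₀, hA₀, hA₀max⟩ := exists_max_image (F.filter fun A => A ≠ s ∧ A.Nonempty) card
    (filter_nonempty_iff.2 hproper)
  obtain ⟨hA₀F, hA₀s, hA₀ne⟩ := mem_filter.1 hA₀
  have hA₀sub : A₀ ⊆ s := hFs A₀ hA₀F
  obtain ⟨t₁, ht₁⟩ := ih A₀ (hA₀sub.ssubset_of_ne hA₀s) (F := F.filter (· ⊆ A₀))
    (fun A hA B hB => hF A (mem_filter.1 hA).1 B (mem_filter.1 hB).1)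
    (fun A hA => (mem_filter.1 hA).2)
  obtain ⟨t₂, ht₂⟩ := ih (s \ A₀) (sdiff_ssubset hA₀sub hA₀ne) (F := F.filter (Disjoint · A₀))
    (fun A hA B hB => hF A (mem_filter.1 hA).1 B (mem_filter.1 hB).1)
    (fun A hA => subset_sdiff.2 ⟨hFs A (mem_filter.1 hA).1, (mem_filter.1 hA).2⟩)
  have hK : ∀ x ∈ A₀, t₁ x < A₀.sup t₁ + 1 := fun x hx => Nat.lt_succ_of_le (le_sup hx)
  refine ⟨A₀.piecewise t₁ (A₀.sup t₁ + 1 + t₂ ·), fun A hA => ?_⟩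
  by_cases hAs : A = s
  · rw [hAs]; exact isConvexAlong_self _ s
  rcases A.eq_empty_or_nonempty with hAe | hAne
  · rw [hAe]; exact isConvexAlong_empty _ s
  rcases hF A hA A₀ hA₀F with hsub | hsup | hdisj
  · exact isConvexAlong_piecewise_of_subset hK hsub (ht₁ A (mem_filter.2 ⟨hA, hsub⟩))
  · have hAA₀ : A = A₀ := (eq_of_subset_of_card_le hsup
      (hA₀max A (mem_filter.2 ⟨hA, hAs, hAne⟩))).symm
    exact isConvexAlong_piecewise_of_subset hK hAA₀.le (ht₁ A (mem_filter.2 ⟨hA, hAA₀.le⟩))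
  · exact isConvexAlong_piecewise_of_disjoint hK hdisj (ht₂ A (mem_filter.2 ⟨hA, hdisj⟩))

end Finset

lemma mul_sub_half_neg_iff {k m n : ℕ} (h : m ≤ n + 1) :
    ((k : ℝ) - (m - 1 / 2)) * (k - (n + 1 / 2)) < 0 ↔ m ≤ k ∧ k ≤ n := by
  have h' : (m : ℝ) ≤ n + 1 := by exact_mod_cast h
  constructor
  · intro hneg
    by_contra hout
    rcases (by omega : k + 1 ≤ m ∨ n + 1 ≤ k) with hk | hk
    · have : (k : ℝ) + 1 ≤ m := by exact_mod_cast hk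
      nlinarith
    · have : (n : ℝ) + 1 ≤ k := by exact_mod_cast hk
      nlinarith
  · rintro ⟨hmk, hkn⟩
    have : (m : ℝ) ≤ k := by exact_mod_cast hmk
    have : (k : ℝ) ≤ n := by exact_mod_cast hkn
    nlinarith

lemma mul_sub_half_ne_zero (k m n : ℕ) : ((k : ℝ) - (m - 1 / 2)) * (k - (n + 1 / 2)) ≠ 0 := by
  have hm : (k : ℝ) - (m - 1 / 2) ≠ 0 := by
    rcases le_or_gt m k with h | h
    · have : (m : ℝ) ≤ k := by exact_mod_cast h
      linarith
    · have : (k : ℝ) + 1 ≤ m := by exact_mod_cast h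
      linarith
  have hn : (k : ℝ) - (n + 1 / 2) ≠ 0 := by
    rcases le_or_gt k n with h | h
    · have : (k : ℝ) ≤ n := by exact_mod_cast h
      linarith
    · have : (n : ℝ) + 1 ≤ k := by exact_mod_cast h
      linarith
  exact mul_ne_zero hm hn

theorem Finset.IsConvexAlong.exists_quadratic {α : Type*} {t : α → ℕ} {s A : Finset α}
    (h : IsConvexAlong t s A) :
    ∃ a b : ℝ, ∀ y ∈ s,
      ((t y : ℝ) - a) * (t y - b) ≠ 0 ∧ (y ∈ A ↔ ((t y : ℝ) - a) * (t y - b) < 0) := by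
  rcases A.eq_empty_or_nonempty with rfl | hA
  · refine ⟨(1 : ℕ) - 1 / 2, (0 : ℕ) + 1 / 2, fun y _ => ⟨mul_sub_half_ne_zero _ _ _, ?_⟩⟩
    rw [mul_sub_half_neg_iff le_rfl]
    simp only [notMem_empty, false_iff]
    omega
  obtain ⟨x, hx, hxmin⟩ := A.exists_min_image t hA
  obtain ⟨z, hz, hzmax⟩ := A.exists_max_image t hA
  refine ⟨t x - 1 / 2, t z + 1 / 2, fun y hy => ⟨mul_sub_half_ne_zero _ _ _, ?_⟩⟩
  rw [mul_sub_half_neg_iff (Nat.le_succ_of_le (hxmin z hz))]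
  exact ⟨fun hyA => ⟨hxmin y hyA, hzmax y hyA⟩, fun ⟨hxy, hyz⟩ => h x hx z hz y hy hxy hyz⟩

lemma eq_iff_eq_iff_eq_of_sign {x y z : ℝ} (hx : x = 1 ∨ x = -1) (hy : y = 1 ∨ y = -1)
    (hz : z = 1 ∨ z = -1) : x = y ↔ (x = z ↔ y = z) := by
  rcases hx with rfl | rfl <;> rcases hy with rfl | rfl <;> rcases hz with rfl | rfl <;> norm_num

lemma sign_eq_one_iff_pos {x σ Q D : ℝ} (hx : x = 1 ∨ x = -1) (hσ : σ = 1 ∨ σ = -1)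
    (hQ : Q ≠ 0) (hD : 0 < D) (h : x ≠ σ ↔ Q < 0) :
    σ * Q / D ≠ 0 ∧ (x = 1 ↔ 0 < σ * Q / D) := by
  rw [div_ne_zero_iff, div_pos_iff_of_pos_right hD]
  rcases hx with rfl | rfl <;> rcases hσ with rfl | rfl <;> norm_num at h ⊢ <;>
    exact ⟨⟨hQ, hD.ne'⟩, by grind⟩

section SignMatrix

variable {R C : Type*}

lemma le_vcdim_of_shattered [Fintype C] {M : Matrix R C ℝ} {T : Finset C}
    (hT : Shattered M T) : #T ≤ VCdim M :=
  le_csSup ⟨Fintype.card C, fun _ ⟨T, hk, _⟩ => hk ▸ card_le_univ T⟩ ⟨T, rfl, hT⟩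

noncomputable def disagreeRows [Fintype R] (M : Matrix R C ℝ) (r₀ : R) (c : C) : Finset R :=
  {r | M r c ≠ M r₀ c}

lemma mem_disagreeRows [Fintype R] {M : Matrix R C ℝ} {r₀ r : R} {c : C} :
    r ∈ disagreeRows M r₀ c ↔ M r c ≠ M r₀ c := by
  simp [disagreeRows]

lemma shattered_pair_of_not_laminar [Fintype R] [DecidableEq C] {M : Matrix R C ℝ}
    (hM : IsSignMatrix M) {r₀ : R} {c d : C}
    (h : ¬(disagreeRows M r₀ c ⊆ disagreeRows M r₀ d ∨ disagreeRows M r₀ d ⊆ disagreeRows M r₀ c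
      ∨ Disjoint (disagreeRows M r₀ c) (disagreeRows M r₀ d))) :
    Shattered M {c, d} := by
  simp only [not_or, not_subset, not_disjoint_iff, mem_disagreeRows, not_not] at h
  obtain ⟨⟨r₁, hr₁c, hr₁d⟩, ⟨r₂, hr₂d, hr₂c⟩, ⟨r₃, hr₃c, hr₃d⟩⟩ := h
  intro v hv
  simp only [mem_insert, mem_singleton, forall_eq_or_imp, forall_eq] at hv ⊢
  suffices ∃ r, (M r c = M r₀ c ↔ v c = M r₀ c) ∧ (M r d = M r₀ d ↔ v d = M r₀ d) by
    obtain ⟨r, hrc, hrd⟩ := this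
    exact ⟨r, (eq_iff_eq_iff_eq_of_sign (hM r c) hv.1 (hM r₀ c)).2 hrc,
      (eq_iff_eq_iff_eq_of_sign (hM r d) hv.2 (hM r₀ d)).2 hrd⟩
  by_cases hc : v c = M r₀ c <;> by_cases hd : v d = M r₀ d
  · exact ⟨r₀, by simp [hc], by simp [hd]⟩
  · exact ⟨r₂, by simp [hc, hr₂c], by simp [hd, hr₂d]⟩
  · exact ⟨r₁, by simp [hc, hr₁c], by simp [hd, hr₁d]⟩
  · exact ⟨r₃, by simp [hc, hr₃c], by simp [hd, hr₃d]⟩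

theorem isLaminar_disagreeRows [Fintype R] [DecidableEq R] [Fintype C] {M : Matrix R C ℝ}
    (hM : IsSignMatrix M) (hVC : VCdim M ≤ 1) (r₀ : R) :
    IsLaminar (univ.image (disagreeRows M r₀)) := by
  classical
  simp only [IsLaminar, mem_image, mem_univ, true_and, forall_exists_index,
    forall_apply_eq_imp_iff]
  intro c d
  by_contra h
  have hcd : c ≠ d := by rintro rfl; exact h (Or.inl subset_rfl)
  have := le_vcdim_of_shattered (shattered_pair_of_not_laminar hM h)
  rw [card_pair hcd] at this
  omega

end SignMatrix

noncomputable def circlePoint (t : ℝ) : EuclideanSpace ℝ (Fin 2) :=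
  !₂[(1 - t ^ 2) / (1 + t ^ 2), 2 * t / (1 + t ^ 2)]

/-- With `chordOffset a b`, the line through `circlePoint a` and `circlePoint b`. -/
noncomputable def chordNormal (a b : ℝ) : EuclideanSpace ℝ (Fin 2) :=
  !₂[(a * b - 1) / 2, -(a + b) / 2]

noncomputable def chordOffset (a b : ℝ) : ℝ := (a * b + 1) / 2

lemma norm_circlePoint (t : ℝ) : ‖circlePoint t‖ = 1 := by
  have h : (1 : ℝ) + t ^ 2 ≠ 0 := by positivity
  rw [EuclideanSpace.norm_eq, Real.sqrt_eq_one]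
  simp [circlePoint, Fin.sum_univ_two]
  field_simp
  ring

lemma inner_smul_chordNormal_circlePoint_add (σ a b t : ℝ) :
    ⟪σ • chordNormal a b, circlePoint t⟫ + σ * chordOffset a b
      = σ * ((t - a) * (t - b)) / (1 + t ^ 2) := by
  have h : (1 : ℝ) + t ^ 2 ≠ 0 := by positivity
  simp [chordNormal, circlePoint, chordOffset, PiLp.inner_apply, Fin.sum_univ_two]
  field_simp
  ring

theorem embedding_in_plane_of_vcdim_le_one_general
    (R C : ℕ) (M : Matrix (Fin R) (Fin C) ℝ) (hM : IsSignMatrix M)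
    (hVC : VCdim M ≤ 1) :
    ∃ (x : Fin R → EuclideanSpace ℝ (Fin 2)) (a : Fin C → EuclideanSpace ℝ (Fin 2))
      (b : Fin C → ℝ),
      (∀ r, ‖x r‖ = 1) ∧
      (∀ r c, ⟪a c, x r⟫ + b c ≠ 0) ∧
      (∀ r c, M r c = 1 ↔ 0 < ⟪a c, x r⟫ + b c) := by
  rcases isEmpty_or_nonempty (Fin R) with hR | ⟨⟨r₀⟩⟩
  · exact ⟨isEmptyElim, 0, 0, isEmptyElim, fun r => isEmptyElim r, fun r => isEmptyElim r⟩
  obtain ⟨t, ht⟩ := (isLaminar_disagreeRows hM hVC r₀).exists_isConvexAlong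
    (s := univ) fun _ _ => subset_univ _
  choose α β hαβ using fun c => (ht _ (mem_image_of_mem _ (mem_univ c))).exists_quadratic
  have key r c := sign_eq_one_iff_pos (hM r c) (hM r₀ c) (hαβ c r (mem_univ r)).1
    (by positivity : (0 : ℝ) < 1 + (t r : ℝ) ^ 2)
    (mem_disagreeRows.symm.trans (hαβ c r (mem_univ r)).2)
  refine ⟨fun r => circlePoint (t r), fun c => M r₀ c • chordNormal (α c) (β c),
    fun c => M r₀ c * chordOffset (α c) (β c), fun r => norm_circlePoint _, fun r c => ?_,
    fun r c => ?_⟩ <;> rw [inner_smul_chordNormal_circlePoint_add]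
  exacts [(key r c).1, (key r c).2]

/-- a sign matrix of VC dimension at most one with pairwise distinct rows can be
embedded in the plane using half-planes, with the rows mapped to points on the unit circle:
row `r` goes to a unit vector `x r ∈ ℝ²`, column `c` to an (affine) halfplane
`{z : ⟪a c, z⟫ + b c > 0}`, no point lies on the boundary of a halfplane, and
`M r c = 1` iff `x r` lies in the halfplane of `c`. -/
theorem embedding_in_plane_of_vcdim_le_one
    (R C : ℕ) (M : Matrix (Fin R) (Fin C) ℝ) (hM : IsSignMatrix M)
    (hVC : VCdim M ≤ 1)
    (hrows : ∀ r r' : Fin R, (∀ c, M r c = M r' c) → r = r') :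
    ∃ (x : Fin R → EuclideanSpace ℝ (Fin 2)) (a : Fin C → EuclideanSpace ℝ (Fin 2))
      (b : Fin C → ℝ),
      (∀ r, ‖x r‖ = 1) ∧
      (∀ r c, ⟪a c, x r⟫ + b c ≠ 0) ∧
      (∀ r c, M r c = 1 ↔ 0 < ⟪a c, x r⟫ + b c) :=
  embedding_in_plane_of_vcdim_le_one_general R C M hM hVC
end

section
/- Let S be an R×C sign matrix and suppose there is a permutation π of the rows such that for every column c, the number of indices i with S_{π(i),c} ≠ S_{π(i+1),c} is at most k. Then the sign rank of S is at most k + 1. -/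
private lemma step_pos_aux {A B B' σ σ' : ℝ} (hP : 0 < A * B' * σ)
    (hBB : 0 < (B * B') * (σ * σ')) : 0 < A * B * σ' := by
  have hA : A ≠ 0 := by
    rintro rfl; simp at hP
  have h2 : 0 < A ^ 2 := (sq_nonneg A).lt_of_ne (Ne.symm (pow_ne_zero 2 hA))
  have hprod : 0 < (A * B * σ') * (A * B' * σ) := by nlinarith [mul_pos hBB h2]
  rcases lt_trichotomy (A * B * σ') 0 with h | h | h
  · nlinarith [mul_pos (neg_pos.mpr h) hP]
  · rw [h, zero_mul] at hprod; exact absurd hprod (lt_irrefl 0)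
  · exact h

/-- if there is a permutation `π` of the rows of a sign matrix `S` such that in
the permuted matrix every column has at most `k` sign changes (consecutive rows differing in
that column), then the sign rank of `S` is at most `k + 1`. -/
theorem signRank_le_of_signChanges_le
    (R C : ℕ) (S : Matrix (Fin R) (Fin C) ℝ) (hS : IsSignMatrix S)
    (k : ℕ) (π : Equiv.Perm (Fin R))
    (hsc : ∀ c : Fin C,
      {i : Fin R | ∃ h : (i : ℕ) + 1 < R, S (π i) c ≠ S (π ⟨(i : ℕ) + 1, h⟩) c}.ncard ≤ k) :
    signRank S ≤ k + 1 := by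
  classical
  have key : ∀ (M : Matrix (Fin R) (Fin C) ℝ), (∀ i j, 0 < M i j * S i j) →
      M.rank ≤ k + 1 → signRank S ≤ k + 1 := by
    intro M h1 h2
    exact le_trans (Nat.sInf_le ⟨M, h1, rfl⟩) h2
  rcases Nat.eq_zero_or_pos R with hR | hR
  · subst hR
    refine key 0 (fun i => i.elim0) ?_
    calc (0 : Matrix (Fin 0) (Fin C) ℝ).rank ≤ Fintype.card (Fin 0) :=
          Matrix.rank_le_card_height _
      _ ≤ k + 1 := by simp
  set i0 : Fin R := ⟨0, hR⟩ with hi0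
  set T : Fin C → Finset (Fin R) := fun c => Finset.univ.filter
    (fun i => ∃ h : (i : ℕ) + 1 < R, S (π i) c ≠ S (π ⟨(i : ℕ) + 1, h⟩) c) with hTdef
  have hT : ∀ c, (T c).card ≤ k := by
    intro c
    have hset : {i : Fin R | ∃ h : (i : ℕ) + 1 < R, S (π i) c ≠ S (π ⟨(i : ℕ) + 1, h⟩) c}
        = ↑(T c) := by
      ext i; simp [hTdef]
    have := hsc c
    rwa [hset, Set.ncard_coe_finset] at this
  set a : Fin R → ℝ := fun i => (i : ℕ) + 1/2 with ha
  set E : Fin C → ℝ → ℝ := fun c x => ∏ i ∈ T c, (x - a i) with hE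
  set s : Fin C → ℝ := fun c => S (π i0) c * E c 0 with hs
  have hSne : ∀ x c, S x c ≠ 0 := by
    intro x c; rcases hS x c with h | h <;> rw [h] <;> norm_num
  have hE0 : ∀ c, E c 0 ≠ 0 := by
    intro c
    rw [hE]
    apply Finset.prod_ne_zero_iff.mpr
    intro i _
    have hai : (0 : ℝ) < a i := by
      have : a i = (i : ℕ) + 1/2 := rfl
      rw [this]; positivity
    rw [sub_ne_zero]
    exact ne_of_lt hai
  have hpair : ∀ (n : ℕ) (i : Fin R), (i : ℕ) ≠ n →
      0 < ((n : ℝ) + 1 - a i) * ((n : ℝ) - a i) := by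
    intro n i hne
    have hai : a i = ((i : ℕ) : ℝ) + 1/2 := rfl
    rw [hai]
    rcases lt_or_gt_of_ne hne with h | h
    · have h1 : ((i : ℕ) : ℝ) + 1 ≤ (n : ℝ) := by exact_mod_cast h
      apply mul_pos <;> linarith
    · have h1 : (n : ℝ) + 1 ≤ ((i : ℕ) : ℝ) := by exact_mod_cast h
      apply mul_pos_of_neg_of_neg <;> linarith
  have hprodpair : ∀ c (n : ℕ),
      E c ((n : ℝ) + 1) * E c (n : ℝ)
        = ∏ i ∈ T c, (((n : ℝ) + 1 - a i) * ((n : ℝ) - a i)) := by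
    intro c n
    rw [hE]
    exact (Finset.prod_mul_distrib).symm
  have hflipneg : ∀ c (n : ℕ) (hn : n < R), (⟨n, hn⟩ : Fin R) ∈ T c →
      E c ((n : ℝ) + 1) * E c (n : ℝ) < 0 := by
    intro c n hn hmem
    rw [hprodpair c n, ← Finset.mul_prod_erase _ _ hmem]
    apply mul_neg_of_neg_of_pos
    · have haj : a ⟨n, hn⟩ = (n : ℝ) + 1/2 := rfl
      rw [haj]; nlinarith
    · apply Finset.prod_pos
      intro i hi
      apply hpair
      intro hcon
      exact (Finset.ne_of_mem_erase hi) (Fin.ext hcon)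
  have hflippos : ∀ c (n : ℕ) (hn : n < R), (⟨n, hn⟩ : Fin R) ∉ T c →
      0 < E c ((n : ℝ) + 1) * E c (n : ℝ) := by
    intro c n hn hmem
    rw [hprodpair c n]
    apply Finset.prod_pos
    intro i hi
    apply hpair
    intro hcon
    have : i = (⟨n, hn⟩ : Fin R) := Fin.ext hcon
    rw [this] at hi
    exact hmem hi
  have main : ∀ c (n : ℕ) (hn : n < R), 0 < s c * E c (n : ℝ) * S (π ⟨n, hn⟩) c := by
    intro c n
    induction n with
    | zero =>
      intro hn
      have h0 : (⟨0, hn⟩ : Fin R) = i0 := rfl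
      rw [h0]
      simp only [hs]
      have hne := mul_ne_zero (hSne (π i0) c) (hE0 c)
      have hsq : 0 < (S (π i0) c * E c 0) ^ 2 :=
        (sq_nonneg _).lt_of_ne (Ne.symm (pow_ne_zero 2 hne))
      have hcast : ((0 : ℕ) : ℝ) = 0 := by norm_num
      rw [hcast]
      nlinarith [hsq]
    | succ n ih =>
      intro hn
      have hn' : n < R := Nat.lt_of_succ_lt hn
      have ihh := ih hn'
      have hcast : ((n + 1 : ℕ) : ℝ) = (n : ℝ) + 1 := by push_cast; ring
      rw [hcast]
      by_cases hj : (⟨n, hn'⟩ : Fin R) ∈ T c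
      · have hlt := hflipneg c n hn' hj
        have hmem := hj
        rw [hTdef] at hmem
        simp only [Finset.mem_filter, Finset.mem_univ, true_and] at hmem
        obtain ⟨h', hne'⟩ := hmem
        have hfe : (⟨((⟨n, hn'⟩ : Fin R) : ℕ) + 1, h'⟩ : Fin R) = ⟨n + 1, hn⟩ := rfl
        rw [hfe] at hne'
        have hσσ : S (π ⟨n, hn'⟩) c * S (π ⟨n + 1, hn⟩) c = -1 := by
          rcases hS (π ⟨n, hn'⟩) c with h1 | h1 <;> rcases hS (π ⟨n + 1, hn⟩) c with h2 | h2 <;>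
            first
              | (exact absurd (h1.trans h2.symm) hne')
              | (rw [h1, h2]; norm_num)
        apply step_pos_aux ihh
        rw [hσσ, mul_neg_one]
        linarith
      · have hpos := hflippos c n hn' hj
        have hmem := hj
        rw [hTdef] at hmem
        simp only [Finset.mem_filter, Finset.mem_univ, true_and, not_exists] at hmem
        have heq : S (π ⟨n, hn'⟩) c = S (π ⟨n + 1, hn⟩) c := by
          have := hmem hn
          exact not_not.mp (by exact this)
        have hσσ : S (π ⟨n, hn'⟩) c * S (π ⟨n + 1, hn⟩) c = 1 := by
          rw [← heq]
          rcases hS (π ⟨n, hn'⟩) c with h1 | h1 <;> rw [h1] <;> norm_num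
        apply step_pos_aux ihh
        rw [hσσ, mul_one]
        exact hpos
  -- polynomials
  set q : Fin C → Polynomial ℝ := fun c => ∏ i ∈ T c, (Polynomial.X - Polynomial.C (a i))
    with hq
  have hqdeg : ∀ c, (q c).natDegree ≤ k := by
    intro c
    rw [hq]
    calc (∏ i ∈ T c, (Polynomial.X - Polynomial.C (a i))).natDegree
        = ∑ i ∈ T c, (Polynomial.X - Polynomial.C (a i)).natDegree :=
          Polynomial.natDegree_prod _ _ (fun i _ => Polynomial.X_sub_C_ne_zero _)
      _ = (T c).card := by simp [Polynomial.natDegree_X_sub_C]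
      _ ≤ k := hT c
  have hqeval : ∀ c x, (q c).eval x = E c x := by
    intro c x
    rw [hq, hE]
    simp [Polynomial.eval_prod]
  set p : Fin C → Polynomial ℝ := fun c => Polynomial.C (s c) * q c with hp
  have hpdeg : ∀ c, (p c).natDegree < k + 1 := by
    intro c
    have h1 := Polynomial.natDegree_mul_le (p := Polynomial.C (s c)) (q := q c)
    rw [Polynomial.natDegree_C] at h1
    have : (p c).natDegree ≤ (q c).natDegree := by
      rw [hp]; simpa using h1
    exact Nat.lt_succ_of_le (le_trans this (hqdeg c))
  have hpeval : ∀ c x, (p c).eval x = s c * E c x := by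
    intro c x
    rw [hp]
    simp [hqeval]
  set Amat : Matrix (Fin R) (Fin (k + 1)) ℝ :=
    fun i m => (((π.symm i : Fin R) : ℕ) : ℝ) ^ (m : ℕ) with hA
  set Bmat : Matrix (Fin (k + 1)) (Fin C) ℝ := fun m c => (p c).coeff (m : ℕ) with hB
  refine key (Amat * Bmat) ?_ ?_
  · intro i c
    have hMe : (Amat * Bmat) i c = (p c).eval (((π.symm i : Fin R) : ℕ) : ℝ) := by
      rw [Matrix.mul_apply, Polynomial.eval_eq_sum_range' (hpdeg c),
        ← Fin.sum_univ_eq_sum_range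
          (fun j => (p c).coeff j * (((π.symm i : Fin R) : ℕ) : ℝ) ^ j) (k + 1)]
      exact Finset.sum_congr rfl fun m _ => by rw [hA, hB, mul_comm]
    rw [hMe, hpeval]
    have hn : ((π.symm i : Fin R) : ℕ) < R := (π.symm i).isLt
    have := main c ((π.symm i : Fin R) : ℕ) hn
    have hfin : (⟨((π.symm i : Fin R) : ℕ), hn⟩ : Fin R) = π.symm i := Fin.eta _ _
    rw [hfin, Equiv.apply_symm_apply] at this
    exact this
  · calc (Amat * Bmat).rank ≤ Amat.rank := Matrix.rank_mul_le_left _ _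
      _ ≤ Fintype.card (Fin (k + 1)) := Matrix.rank_le_card_width _
      _ = k + 1 := Fintype.card_fin _
end

section
/- Let B be a Δ-regular N×N boolean matrix with 1 ≤ Δ ≤ N/2, let S = 2B − J be its signed version, and let λ > 0 be such that ‖Bx‖ ≤ λ‖x‖ for every x ∈ ℝ^N whose coordinates sum to zero. Then the matrix M = (N/Δ)·B − J satisfies M_{i,j}·S_{i,j} ≥ 1 for all i,j, and ‖M‖ ≤ N·λ/Δ. -/
/-- The Euclidean (ℓ²) norm of a vector in `ℝ^N`. -/
noncomputable def euclNorm {N : ℕ} (x : Fin N → ℝ) : ℝ :=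
  Real.sqrt (∑ i, x i ^ 2)

/-- The spectral norm (ℓ² → ℓ² operator norm) of a real `N × N` matrix: the least nonnegative
`t` with `‖Mx‖ ≤ t‖x‖` for all `x`. -/
noncomputable def specNorm {N : ℕ} (M : Matrix (Fin N) (Fin N) ℝ) : ℝ :=
  sInf {t : ℝ | 0 ≤ t ∧ ∀ x : Fin N → ℝ, euclNorm (M.mulVec x) ≤ t * euclNorm x}

/-!
Entrywise, `M = (N/Δ)B - J` has the sign of `S` and absolute value at least `1` because
`N/Δ ≥ 2`. For the norm, the row sums of `B` are all `Δ`, so `M x = (N/Δ) B x₀` where `x₀` is `x`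
minus its mean. Then `x₀` has coordinate sum zero and `‖x₀‖ ≤ ‖x‖`, so the spectral gap gives
`‖M x‖ ≤ (N/Δ) λ ‖x‖`.
-/

open Finset Matrix

section

variable {N : ℕ}

noncomputable def centered (x : Fin N → ℝ) : Fin N → ℝ :=
  fun i => x i - (∑ j, x j) / N

lemma sum_centered (x : Fin N → ℝ) : ∑ i, centered x i = 0 := by
  rcases N.eq_zero_or_pos with rfl | hN
  · simp
  · simp only [centered, sum_sub_distrib, sum_const, card_univ, Fintype.card_fin, nsmul_eq_mul]
    field_simp
    ring

lemma sum_sq_centered (x : Fin N → ℝ) :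
    ∑ i, centered x i ^ 2 = ∑ i, x i ^ 2 - N * ((∑ i, x i) / N) ^ 2 := by
  rcases N.eq_zero_or_pos with rfl | hN
  · simp
  · simp only [centered, sub_sq, sum_add_distrib, sum_sub_distrib, ← sum_mul, ← mul_sum,
      sum_const, card_univ, Fintype.card_fin, nsmul_eq_mul]
    field_simp
    ring

lemma euclNorm_centered_le (x : Fin N → ℝ) : euclNorm (centered x) ≤ euclNorm x := by
  refine Real.sqrt_le_sqrt ?_
  rw [sum_sq_centered]
  have : 0 ≤ (N : ℝ) * ((∑ i, x i) / N) ^ 2 := by positivity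
  linarith

lemma euclNorm_smul (a : ℝ) (x : Fin N → ℝ) : euclNorm (a • x) = |a| * euclNorm x := by
  simp only [euclNorm, Pi.smul_apply, smul_eq_mul, mul_pow, ← mul_sum]
  rw [Real.sqrt_mul (sq_nonneg a), Real.sqrt_sq_eq_abs]

lemma specNorm_le {M : Matrix (Fin N) (Fin N) ℝ} {t : ℝ} (ht : 0 ≤ t)
    (hM : ∀ x, euclNorm (M *ᵥ x) ≤ t * euclNorm x) : specNorm M ≤ t :=
  csInf_le ⟨0, fun _ hs => hs.1⟩ ⟨ht, hM⟩

lemma smul_sub_ones_mulVec {B : Matrix (Fin N) (Fin N) ℝ} {r a : ℝ}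
    (hrow : ∀ i, ∑ j, B i j = r) (ha : a * r = N) (x : Fin N → ℝ) :
    (a • B - of fun _ _ => 1) *ᵥ x = a • (B *ᵥ centered x) := by
  ext i
  have hN : (N : ℝ) ≠ 0 := Nat.cast_ne_zero.mpr i.pos.ne'
  simp only [mulVec, dotProduct, centered, Matrix.sub_apply, Matrix.smul_apply, of_apply,
    Pi.smul_apply, smul_eq_mul, sub_mul, one_mul, mul_sub, sum_sub_distrib, ← sum_mul, hrow]
  rw [mul_sum, ← mul_assoc a r, ha, mul_div_cancel₀ _ hN]
  simp only [mul_assoc]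

end

lemma one_le_mul_of_boolean {a b : ℝ} (ha : 2 ≤ a) (hb : b = 0 ∨ b = 1) :
    1 ≤ (a * b - 1) * (2 * b - 1) := by
  rcases hb with rfl | rfl <;> linarith

theorem star_norm_bound_of_spectral_gap_general
    (N Δ : ℕ) (hΔ : 1 ≤ Δ) (hΔN : 2 * Δ ≤ N)
    (B : Matrix (Fin N) (Fin N) ℝ)
    (hbool : ∀ i j, B i j = 0 ∨ B i j = 1)
    (hrow : ∀ i, ∑ j, B i j = (Δ : ℝ))
    (lam : ℝ) (hlam : 0 < lam)
    (hgap : ∀ x : Fin N → ℝ, ∑ i, x i = 0 → euclNorm (B.mulVec x) ≤ lam * euclNorm x)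
    (S M : Matrix (Fin N) (Fin N) ℝ)
    (hSdef : S = (2 : ℝ) • B - Matrix.of fun _ _ => 1)
    (hMdef : M = ((N : ℝ) / (Δ : ℝ)) • B - Matrix.of fun _ _ => 1) :
    (∀ i j, 1 ≤ M i j * S i j) ∧ specNorm M ≤ (N : ℝ) * lam / (Δ : ℝ) := by
  have hΔpos : (0 : ℝ) < Δ := by exact_mod_cast hΔ
  have hscale : 2 ≤ (N : ℝ) / Δ := by
    rw [le_div_iff₀ hΔpos]
    exact_mod_cast hΔN
  refine ⟨fun i j => ?_, specNorm_le (by positivity) fun x => ?_⟩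
  · simpa [hMdef, hSdef] using one_le_mul_of_boolean hscale (hbool i j)
  · have hMx : M *ᵥ x = ((N : ℝ) / Δ) • (B *ᵥ centered x) := by
      rw [hMdef]
      exact smul_sub_ones_mulVec hrow (div_mul_cancel₀ _ hΔpos.ne') x
    calc euclNorm (M *ᵥ x) = (N : ℝ) / Δ * euclNorm (B *ᵥ centered x) := by
          rw [hMx, euclNorm_smul, abs_of_nonneg (by positivity)]
      _ ≤ (N : ℝ) / Δ * (lam * euclNorm x) := by
          gcongr
          exact (hgap _ (sum_centered x)).trans
            (mul_le_mul_of_nonneg_left (euclNorm_centered_le x) hlam.le)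
      _ = (N : ℝ) * lam / Δ * euclNorm x := by ring

/-- let `B` be a `Δ`-regular `N × N` boolean matrix with `1 ≤ Δ ≤ N/2`, let
`S = 2B - J` be its signed version, and let `λ > 0` bound `‖Bx‖ ≤ λ‖x‖` for all `x` with
coordinates summing to zero. Then `M = (N/Δ)·B - J` satisfies `M i j * S i j ≥ 1` for all
`i, j`, and `‖M‖ ≤ N·λ/Δ`. -/
theorem star_norm_bound_of_spectral_gap
    (N Δ : ℕ) (hΔ : 1 ≤ Δ) (hΔN : 2 * Δ ≤ N)
    (B : Matrix (Fin N) (Fin N) ℝ)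
    (hbool : ∀ i j, B i j = 0 ∨ B i j = 1)
    (hrow : ∀ i, ∑ j, B i j = (Δ : ℝ)) (hcol : ∀ j, ∑ i, B i j = (Δ : ℝ))
    (lam : ℝ) (hlam : 0 < lam)
    (hgap : ∀ x : Fin N → ℝ, ∑ i, x i = 0 → euclNorm (B.mulVec x) ≤ lam * euclNorm x)
    (S M : Matrix (Fin N) (Fin N) ℝ)
    (hSdef : S = (2 : ℝ) • B - Matrix.of fun _ _ => 1)
    (hMdef : M = ((N : ℝ) / (Δ : ℝ)) • B - Matrix.of fun _ _ => 1) :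
    (∀ i j, 1 ≤ M i j * S i j) ∧ specNorm M ≤ (N : ℝ) * lam / (Δ : ℝ) :=
  star_norm_bound_of_spectral_gap_general N Δ hΔ hΔN B hbool hrow lam hlam hgap S M hSdef hMdef
end

section
/- Let S be an N×N sign matrix. For each row i let γ_i be the minimum of the number of +1 entries and the number of −1 entries in row i, and let γ = max_i γ_i. Then every real N×N matrix M satisfying M_{i,j}·S_{i,j} ≥ 1 for all i,j has spectral norm ‖M‖ ≥ (N − γ)/(√γ + 1). -/
/-- The Frobenius norm witnesses nonemptiness of the defining set of `specNorm`. -/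
lemma specNorm_set_nonempty {N : ℕ} (M : Matrix (Fin N) (Fin N) ℝ) :
    {t : ℝ | 0 ≤ t ∧ ∀ x : Fin N → ℝ, euclNorm (M.mulVec x) ≤ t * euclNorm x}.Nonempty := by
  refine ⟨Real.sqrt (∑ i, ∑ j, M i j ^ 2), Real.sqrt_nonneg _, fun x => ?_⟩
  rw [euclNorm, euclNorm, ← Real.sqrt_mul (by positivity)]
  apply Real.sqrt_le_sqrt
  rw [Finset.sum_mul]
  apply Finset.sum_le_sum
  intro i _
  simpa [Matrix.mulVec, dotProduct] using
    Finset.sum_mul_sq_le_sq_mul_sq Finset.univ (fun j => M i j) (fun j => x j)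

/-- let `S` be an `N × N` sign matrix, `γ_i` the minimum of the number of `+1`
entries and the number of `-1` entries in row `i`, and `γ = max_i γ_i`. Then every real matrix
`M` with `M i j * S i j ≥ 1` for all `i, j` satisfies `‖M‖ ≥ (N - γ)/(√γ + 1)`. -/
theorem specNorm_ge_of_entrywise
    (N : ℕ) (S : Matrix (Fin N) (Fin N) ℝ) (hS : IsSignMatrix S)
    (γ : ℕ)
    (hγ : γ = Finset.univ.sup fun i : Fin N =>
      min {j : Fin N | S i j = 1}.ncard {j : Fin N | S i j = -1}.ncard)
    (M : Matrix (Fin N) (Fin N) ℝ) (hM : ∀ i j, 1 ≤ M i j * S i j) :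
    ((N : ℝ) - (γ : ℝ)) / (Real.sqrt γ + 1) ≤ specNorm M := by
  have hden : (0:ℝ) < Real.sqrt γ + 1 := by positivity
  apply le_csInf (specNorm_set_nonempty M)
  rintro t ⟨ht0, htx⟩
  -- dispose of the trivial case
  rcases le_or_gt ((N:ℝ) - γ) 0 with hNγ | hNγ
  · exact le_trans (div_nonpos_of_nonpos_of_nonneg hNγ hden.le) ht0
  have hNpos : (0:ℝ) < N := by
    have hγ0 : (0:ℝ) ≤ γ := Nat.cast_nonneg _
    linarith
  rw [div_le_iff₀ hden]
  -- setup: plus/minus sets, minority set T, majority sign s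
  set P : Fin N → Finset (Fin N) := fun i => Finset.univ.filter (fun j => S i j = 1) with hP
  set Q : Fin N → Finset (Fin N) := fun i => Finset.univ.filter (fun j => S i j = -1) with hQ
  have hQP : ∀ i, Q i = (P i)ᶜ := by
    intro i
    ext j
    simp only [hP, hQ, Finset.mem_filter, Finset.mem_compl, Finset.mem_univ, true_and]
    constructor
    · intro h h1; rw [h1] at h; norm_num at h
    · intro h; rcases hS i j with h1 | h1; exact absurd h1 h; exact h1
  set T : Fin N → Finset (Fin N) := fun i =>
    if (Q i).card ≤ (P i).card then Q i else P i with hT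
  set sg : Fin N → ℝ := fun i => if (Q i).card ≤ (P i).card then 1 else -1 with hsg
  have hsgsq : ∀ i, sg i ^ 2 = 1 := by
    intro i; simp only [hsg]; split <;> norm_num
  have hTγ : ∀ i, (T i).card ≤ γ := by
    intro i
    have hle : min ({j : Fin N | S i j = 1}.ncard) ({j : Fin N | S i j = -1}.ncard) ≤ γ := by
      rw [hγ]
      exact Finset.le_sup (f := fun i : Fin N =>
        min {j : Fin N | S i j = 1}.ncard {j : Fin N | S i j = -1}.ncard) (Finset.mem_univ i)
    have h1 : {j : Fin N | S i j = 1}.ncard = (P i).card := by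
      rw [Set.ncard_eq_toFinset_card']; congr 1; ext j; simp [hP]
    have h2 : {j : Fin N | S i j = -1}.ncard = (Q i).card := by
      rw [Set.ncard_eq_toFinset_card']; congr 1; ext j; simp [hQ]
    rw [h1, h2] at hle
    simp only [hT]
    split
    · rename_i h
      rwa [min_eq_right h] at hle
    · rename_i h
      rwa [min_eq_left (le_of_lt (not_le.mp h))] at hle
  -- sign relations
  have hmemT : ∀ i j, j ∈ T i → sg i * M i j = -(M i j * S i j) := by
    intro i j hj
    by_cases h : (Q i).card ≤ (P i).card
    · have hTi : T i = Q i := by simp [hT, h]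
      have hsi : sg i = 1 := by simp [hsg, h]
      rw [hTi] at hj
      have hs : S i j = -1 := by simpa [hQ] using hj
      rw [hsi, hs]; ring
    · have hTi : T i = P i := by simp [hT, h]
      have hsi : sg i = -1 := by simp [hsg, h]
      rw [hTi] at hj
      have hs : S i j = 1 := by simpa [hP] using hj
      rw [hsi, hs]; ring
  have hnotmemT : ∀ i j, j ∉ T i → sg i * M i j = M i j * S i j := by
    intro i j hj
    by_cases h : (Q i).card ≤ (P i).card
    · have hTi : T i = Q i := by simp [hT, h]
      have hsi : sg i = 1 := by simp [hsg, h]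
      rw [hTi] at hj
      have hs : S i j = 1 := by
        rcases hS i j with h1 | h1
        · exact h1
        · exact absurd (by simp [hQ, h1]) hj
      rw [hsi, hs]; ring
    · have hTi : T i = P i := by simp [hT, h]
      have hsi : sg i = -1 := by simp [hsg, h]
      rw [hTi] at hj
      have hs : S i j = -1 := by
        rcases hS i j with h1 | h1
        · exact absurd (by simp [hP, h1]) hj
        · exact h1
      rw [hsi, hs]; ring
  -- quantities
  set B : Fin N → ℝ := fun i => ∑ j ∈ T i, M i j * S i j with hB
  set r : Fin N → ℝ := fun i => Real.sqrt (∑ j, M i j ^ 2) with hr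
  set F2 : ℝ := ∑ i, ∑ j, M i j ^ 2 with hF2
  -- Step: column norms give F2 ≤ N * t^2
  have hF2le : F2 ≤ N * t ^ 2 := by
    rw [hF2]
    have : ∀ j : Fin N, ∑ i, M i j ^ 2 ≤ t ^ 2 := by
      intro j
      have hx := htx (Pi.single j 1)
      have hcol : M.mulVec (Pi.single j 1) = fun i => M i j := by
        ext i
        simp [Matrix.mulVec, dotProduct, Pi.single_apply]
      have hnorm1 : euclNorm (Pi.single j (1:ℝ) : Fin N → ℝ) = 1 := by
        rw [euclNorm]
        have : ∑ i, (Pi.single j (1:ℝ) : Fin N → ℝ) i ^ 2 = 1 := by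
          simp [Pi.single_apply]
        rw [this, Real.sqrt_one]
      rw [hcol, hnorm1, mul_one, euclNorm] at hx
      calc ∑ i, M i j ^ 2 = Real.sqrt (∑ i, M i j ^ 2) ^ 2 := by
              rw [Real.sq_sqrt (by positivity)]
        _ ≤ t ^ 2 := by
              apply pow_le_pow_left₀ (Real.sqrt_nonneg _) hx
    calc ∑ i, ∑ j, M i j ^ 2 = ∑ j, ∑ i, M i j ^ 2 := Finset.sum_comm
      _ ≤ ∑ _j : Fin N, t ^ 2 := Finset.sum_le_sum fun j _ => this j
      _ = N * t ^ 2 := by simp [mul_comm]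
  -- Step: sum of row norms
  have hsumr : ∑ i, r i ≤ N * t := by
    have h1 : ∑ i, r i = ∑ i, 1 * r i := by simp
    have h2 : ∑ i, (1:ℝ) * r i ≤
        Real.sqrt (∑ _i : Fin N, (1:ℝ) ^ 2) * Real.sqrt (∑ i, r i ^ 2) :=
      Real.sum_mul_le_sqrt_mul_sqrt _ _ _
    have h3 : ∑ i, r i ^ 2 = F2 := by
      rw [hF2]
      apply Finset.sum_congr rfl
      intro i _
      rw [hr, Real.sq_sqrt (by positivity)]
    rw [h1]
    calc ∑ i, (1:ℝ) * r i ≤ Real.sqrt (∑ _i : Fin N, (1:ℝ)^2) * Real.sqrt (∑ i, r i ^ 2) := h2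
      _ = Real.sqrt N * Real.sqrt F2 := by rw [h3]; simp
      _ ≤ Real.sqrt N * Real.sqrt (N * t ^ 2) := by
            apply mul_le_mul_of_nonneg_left (Real.sqrt_le_sqrt hF2le) (Real.sqrt_nonneg _)
      _ = Real.sqrt N * (Real.sqrt N * t) := by
            rw [Real.sqrt_mul (by positivity), Real.sqrt_sq ht0]
      _ = Real.sqrt N * Real.sqrt N * t := by ring
      _ = N * t := by rw [Real.mul_self_sqrt (by positivity)]
  -- Step: B i ≤ sqrt γ * r i
  have hBle : ∀ i, B i ≤ Real.sqrt γ * r i := by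
    intro i
    have h2 : B i ≤ Real.sqrt (∑ j ∈ T i, S i j ^ 2) * Real.sqrt (∑ j ∈ T i, M i j ^ 2) := by
      rw [hB]
      have := Real.sum_mul_le_sqrt_mul_sqrt (T i) (fun j => S i j) (fun j => M i j)
      simpa [mul_comm] using this
    have hSsq : ∑ j ∈ T i, S i j ^ 2 = (T i).card := by
      rw [Finset.card_eq_sum_ones]
      push_cast
      apply Finset.sum_congr rfl
      intro j _
      rcases hS i j with h | h <;> rw [h] <;> norm_num
    calc B i ≤ Real.sqrt (∑ j ∈ T i, S i j ^ 2) * Real.sqrt (∑ j ∈ T i, M i j ^ 2) := h2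
      _ ≤ Real.sqrt γ * r i := by
          apply mul_le_mul
          · rw [hSsq]
            exact Real.sqrt_le_sqrt (by exact_mod_cast hTγ i)
          · rw [hr]
            apply Real.sqrt_le_sqrt
            exact Finset.sum_le_sum_of_subset_of_nonneg (Finset.subset_univ _)
              (fun j _ _ => sq_nonneg _)
          · exact Real.sqrt_nonneg _
          · exact Real.sqrt_nonneg _
  -- Step: per-row lower bound
  have hrow : ∀ i, (N:ℝ) - γ ≤ (∑ j, sg i * M i j) + B i := by
    intro i
    have hsplit : (∑ j, sg i * M i j) =
        (∑ j ∈ T i, sg i * M i j) + ∑ j ∈ (T i)ᶜ, sg i * M i j := by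
      rw [Finset.sum_add_sum_compl]
    have h1 : ∑ j ∈ T i, sg i * M i j = -B i := by
      rw [hB, ← Finset.sum_neg_distrib]
      apply Finset.sum_congr rfl
      intro j hj
      rw [hmemT i j hj]
    have h2 : ((N:ℝ) - γ) ≤ ∑ j ∈ (T i)ᶜ, sg i * M i j := by
      have hcard : ((T i)ᶜ.card : ℝ) = (N:ℝ) - (T i).card := by
        rw [Finset.card_compl]
        have : (T i).card ≤ N := le_trans (Finset.card_le_card (Finset.subset_univ _)) (by simp)
        rw [Fintype.card_fin]; exact Nat.cast_sub this
      calc ((N:ℝ) - γ) ≤ ((T i)ᶜ.card : ℝ) := by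
            rw [hcard]
            have := hTγ i
            have : ((T i).card : ℝ) ≤ γ := by exact_mod_cast this
            linarith
        _ = ∑ _j ∈ (T i)ᶜ, (1:ℝ) := by rw [Finset.sum_const]; simp
        _ ≤ ∑ j ∈ (T i)ᶜ, sg i * M i j := by
            apply Finset.sum_le_sum
            intro j hj
            rw [hnotmemT i j (Finset.mem_compl.mp hj)]
            exact hM i j
    rw [hsplit, h1]
    linarith
  -- Step: Cauchy-Schwarz on sg and M1
  have hCS : ∑ i, ∑ j, sg i * M i j ≤ N * t := by
    have key : ∑ i, ∑ j, sg i * M i j = ∑ i, sg i * (M.mulVec (fun _ => 1)) i := by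
      apply Finset.sum_congr rfl
      intro i _
      simp [Matrix.mulVec, dotProduct, Finset.mul_sum]
    rw [key]
    have h2 : ∑ i, sg i * (M.mulVec (fun _ => 1)) i ≤
        Real.sqrt (∑ i, sg i ^ 2) * Real.sqrt (∑ i, (M.mulVec (fun _ => 1)) i ^ 2) :=
      Real.sum_mul_le_sqrt_mul_sqrt _ _ _
    have h3 : ∑ i, sg i ^ 2 = (N:ℝ) := by
      simp [hsgsq]
    have h4 : Real.sqrt (∑ i, (M.mulVec (fun _ => 1)) i ^ 2) ≤ t * Real.sqrt N := by
      have := htx (fun _ => 1)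
      rw [euclNorm, euclNorm] at this
      simpa using this
    calc ∑ i, sg i * (M.mulVec (fun _ => 1)) i
        ≤ Real.sqrt (∑ i, sg i ^ 2) * Real.sqrt (∑ i, (M.mulVec (fun _ => 1)) i ^ 2) := h2
      _ ≤ Real.sqrt N * (t * Real.sqrt N) := by
          rw [h3]
          exact mul_le_mul_of_nonneg_left h4 (Real.sqrt_nonneg _)
      _ = Real.sqrt N * Real.sqrt N * t := by ring
      _ = N * t := by rw [Real.mul_self_sqrt (by positivity)]
  -- Combine everything
  have hsumB : ∑ i, B i ≤ Real.sqrt γ * (N * t) := by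
    calc ∑ i, B i ≤ ∑ i, Real.sqrt γ * r i := Finset.sum_le_sum fun i _ => hBle i
      _ = Real.sqrt γ * ∑ i, r i := by rw [Finset.mul_sum]
      _ ≤ Real.sqrt γ * (N * t) :=
          mul_le_mul_of_nonneg_left hsumr (Real.sqrt_nonneg _)
  have htotal : (N:ℝ) * ((N:ℝ) - γ) ≤ N * t + Real.sqrt γ * (N * t) := by
    calc (N:ℝ) * ((N:ℝ) - γ) = ∑ _i : Fin N, ((N:ℝ) - γ) := by
          rw [Finset.sum_const]; simp [mul_comm]
      _ ≤ ∑ i, ((∑ j, sg i * M i j) + B i) := Finset.sum_le_sum fun i _ => hrow i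
      _ = (∑ i, ∑ j, sg i * M i j) + ∑ i, B i := Finset.sum_add_distrib
      _ ≤ N * t + Real.sqrt γ * (N * t) := add_le_add hCS hsumB
  have : (N:ℝ) * ((N:ℝ) - γ) ≤ (N:ℝ) * (t * (Real.sqrt γ + 1)) := by
    calc (N:ℝ) * ((N:ℝ) - γ) ≤ N * t + Real.sqrt γ * (N * t) := htotal
      _ = (N:ℝ) * (t * (Real.sqrt γ + 1)) := by ring
  exact le_of_mul_le_mul_left this hNpos
end

section
/- Let B be a Δ-regular N×N boolean matrix with N ≥ 2 and 1 ≤ Δ ≤ N. Then there exists a nonzero vector x ∈ ℝ^N whose coordinates sum to zero such that ‖Bx‖ ≥ √(Δ(N−Δ)/(N−1)) · ‖x‖. (Equivalently, the second largest singular value of B is at least √(Δ(N−Δ)/(N−1)).) -/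
open Finset Matrix

section CenteredBasisVector

variable {ι : Type*} [Fintype ι] [DecidableEq ι]

noncomputable def centeredBasisVector (j : ι) : ι → ℝ :=
  (Fintype.card ι : ℝ) • Pi.single j 1 - 1

lemma centeredBasisVector_apply (j i : ι) :
    centeredBasisVector j i = (Fintype.card ι : ℝ) * (if i = j then 1 else 0) - 1 := by
  simp [centeredBasisVector, Pi.single_apply]

lemma sum_centeredBasisVector (j : ι) : ∑ i, centeredBasisVector j i = 0 := by
  simp [centeredBasisVector_apply, sum_sub_distrib]

lemma sum_sq_centeredBasisVector (j : ι) :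
    ∑ i, centeredBasisVector j i ^ 2 = Fintype.card ι * (Fintype.card ι - 1) := by
  have hsq : ∀ i, centeredBasisVector j i ^ 2
      = ((Fintype.card ι : ℝ) ^ 2 - 2 * Fintype.card ι) * (if i = j then 1 else 0) + 1 := by
    intro i
    rw [centeredBasisVector_apply]
    split_ifs <;> ring
  simp only [hsq, sum_add_distrib, ← mul_sum, sum_ite_eq', mem_univ, if_true, sum_const,
    card_univ, nsmul_eq_mul, mul_one]
  ring

lemma centeredBasisVector_ne_zero (hcard : 1 < Fintype.card ι) (j : ι) :
    centeredBasisVector j ≠ 0 := by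
  intro h
  have hj := congrFun h j
  simp only [centeredBasisVector_apply, if_true, mul_one, Pi.zero_apply, sub_eq_zero] at hj
  exact hcard.ne' (by exact_mod_cast hj)

lemma mulVec_centeredBasisVector {m : Type*} (B : Matrix m ι ℝ) {r : ℝ}
    (hrow : ∀ i, ∑ k, B i k = r) (j : ι) (i : m) :
    (B *ᵥ centeredBasisVector j) i = Fintype.card ι * B i j - r := by
  simp only [mulVec, dotProduct, centeredBasisVector_apply, mul_sub, mul_one, sum_sub_distrib,
    mul_ite, mul_zero, sum_ite_eq', mem_univ, if_true, hrow i]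
  ring

end CenteredBasisVector

lemma sum_sq_card_mul_sub_sum_of_zero_or_one {ι : Type*} [Fintype ι] {b : ι → ℝ}
    (hb : ∀ i, b i = 0 ∨ b i = 1) :
    ∑ i, (Fintype.card ι * b i - ∑ k, b k) ^ 2
      = Fintype.card ι * (∑ k, b k) * (Fintype.card ι - ∑ k, b k) := by
  set n : ℝ := (Fintype.card ι : ℝ)
  set s := ∑ k, b k
  have hsq : ∀ i, (n * b i - s) ^ 2 = (n ^ 2 - 2 * n * s) * b i + s ^ 2 := by
    intro i
    rcases hb i with h | h <;> rw [h] <;> ring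
  simp only [hsq, sum_add_distrib, ← mul_sum, sum_const, card_univ, nsmul_eq_mul]
  ring

lemma sqrt_mul_euclNorm_le {N : ℕ} {c : ℝ} {x y : Fin N → ℝ}
    (h : c * ∑ i, x i ^ 2 ≤ ∑ i, y i ^ 2) : Real.sqrt c * euclNorm x ≤ euclNorm y := by
  rw [euclNorm, euclNorm, ← Real.sqrt_mul' _ (sum_nonneg fun i _ => sq_nonneg (x i))]
  exact Real.sqrt_le_sqrt h

theorem second_singular_value_lower_bound_general
    (N Δ : ℕ) (hN : 2 ≤ N)
    (B : Matrix (Fin N) (Fin N) ℝ)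
    (hbool : ∀ i j, B i j = 0 ∨ B i j = 1)
    (hrow : ∀ i, ∑ j, B i j = (Δ : ℝ)) (hcol : ∀ j, ∑ i, B i j = (Δ : ℝ)) :
    ∃ x : Fin N → ℝ, x ≠ 0 ∧ ∑ i, x i = 0 ∧
      Real.sqrt ((Δ : ℝ) * ((N : ℝ) - (Δ : ℝ)) / ((N : ℝ) - 1)) * euclNorm x
        ≤ euclNorm (B.mulVec x) := by
  let j : Fin N := ⟨0, by omega⟩
  refine ⟨centeredBasisVector j, centeredBasisVector_ne_zero (by rw [Fintype.card_fin]; omega) j,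
    sum_centeredBasisVector j, sqrt_mul_euclNorm_le ?_⟩
  have hBx : ∑ i, (B *ᵥ centeredBasisVector j) i ^ 2 = N * Δ * (N - Δ) := by
    simp only [mulVec_centeredBasisVector B hrow, Fintype.card_fin]
    rw [← hcol j]
    simpa using sum_sq_card_mul_sub_sum_of_zero_or_one (hbool · j)
  have hN1 : (N : ℝ) - 1 ≠ 0 := by
    have : (2 : ℝ) ≤ N := by exact_mod_cast hN
    linarith
  rw [sum_sq_centeredBasisVector, hBx, Fintype.card_fin]
  exact le_of_eq (by field_simp)

/-- if `B` is a `Δ`-regular `N × N` boolean matrix with `N ≥ 2` and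
`1 ≤ Δ ≤ N`, then there is a nonzero vector `x` whose coordinates sum to zero with
`‖Bx‖ ≥ √(Δ(N-Δ)/(N-1)) ‖x‖`; i.e. the second largest singular value of `B` is at least
`√(Δ(N-Δ)/(N-1))`. -/
theorem second_singular_value_lower_bound
    (N Δ : ℕ) (hN : 2 ≤ N) (hΔ1 : 1 ≤ Δ) (hΔN : Δ ≤ N)
    (B : Matrix (Fin N) (Fin N) ℝ)
    (hbool : ∀ i j, B i j = 0 ∨ B i j = 1)
    (hrow : ∀ i, ∑ j, B i j = (Δ : ℝ)) (hcol : ∀ j, ∑ i, B i j = (Δ : ℝ)) :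
    ∃ x : Fin N → ℝ, x ≠ 0 ∧ ∑ i, x i = 0 ∧
      Real.sqrt ((Δ : ℝ) * ((N : ℝ) - (Δ : ℝ)) / ((N : ℝ) - 1)) * euclNorm x
        ≤ euclNorm (B.mulVec x) :=
  second_singular_value_lower_bound_general N Δ hN B hbool hrow hcol
end

section
/- Let F be a finite field of order n and let d ≥ 2. Let B be the boolean point–hyperplane incidence matrix of the d-dimensional projective space over F: rows are indexed by the 1-dimensional linear subspaces p of F^{d+1}, columns by the d-dimensional linear subspaces h of F^{d+1}, and B_{p,h} = 1 if p ⊆ h and B_{p,h} = 0 otherwise. Then B·Bᵀ = n^{d−1}·I + ((n^{d−1}−1)/(n−1))·J, where I is the identity matrix and J is the all-ones matrix. -/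
attribute [local instance] Classical.propDecidable

open Module Submodule

lemma aux_card_ne (X : Type*) [Finite X] (a : X) :
    Nat.card {x : X // x ≠ a} = Nat.card X - 1 := by
  classical
  haveI : Fintype X := Fintype.ofFinite _
  rw [Nat.card_eq_fintype_card, Nat.card_eq_fintype_card]
  have h1 := Fintype.card_subtype_compl (fun x : X => x = a)
  have h2 : Fintype.card {x : X // x = a} = 1 := Fintype.card_subtype_eq a
  rw [h2] at h1
  rw [← h1]

section Aux
variable {F : Type} [Field F] [Fintype F]

/-- counting 1-dimensional subspaces of a finite vector space -/
lemma aux_card_lines (V : Type) [AddCommGroup V] [Module F V] [Fintype V]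
    [FiniteDimensional F V] :
    Nat.card {p : Submodule F V // finrank F p = 1} * (Fintype.card F - 1)
      = Fintype.card F ^ finrank F V - 1 := by
  classical
  haveI : Finite (Submodule F V) :=
    Finite.of_injective (fun s => (s : Set V)) SetLike.coe_injective
  haveI : Fintype {p : Submodule F V // finrank F p = 1} := Fintype.ofFinite _
  set f : {v : V // v ≠ 0} → {p : Submodule F V // finrank F p = 1} :=
    fun v => ⟨Submodule.span F {v.1}, finrank_span_singleton v.2⟩ with hf
  have hfiber : ∀ p : {p : Submodule F V // finrank F p = 1},
      Nat.card {v // f v = p} = Fintype.card F - 1 := by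
    intro p
    have he : {v // f v = p} ≃ {w : p.1 // w ≠ 0} := by
      refine ⟨fun v => ⟨⟨v.1.1, ?_⟩, ?_⟩, fun w => ⟨⟨w.1.1, ?_⟩, ?_⟩, ?_, ?_⟩
      · have : Submodule.span F {v.1.1} = p.1 := congrArg Subtype.val v.2
        exact this ▸ Submodule.mem_span_singleton_self _
      · simp only [ne_eq, Submodule.mk_eq_zero]; exact v.1.2
      · simpa using w.2
      · apply Subtype.ext
        show Submodule.span F {w.1.1} = p.1
        apply Submodule.eq_of_le_of_finrank_eq
        · rw [Submodule.span_le, Set.singleton_subset_iff]; exact w.1.2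
        · rw [finrank_span_singleton (by simpa using w.2), p.2]
      · intro v; rfl
      · intro w; rfl
    rw [Nat.card_congr he, aux_card_ne]
    have hc : Nat.card p.1 = Fintype.card F := by
      rw [Nat.card_eq_fintype_card, card_eq_pow_finrank (K := F) (V := p.1), p.2, pow_one]
    rw [hc]
  have h1 : Nat.card {v : V // v ≠ 0} = Fintype.card V - 1 := by
    rw [aux_card_ne V 0, Nat.card_eq_fintype_card]
  have h2 : Nat.card {v : V // v ≠ 0}
      = Nat.card {p : Submodule F V // finrank F p = 1} * (Fintype.card F - 1) := by
    rw [Nat.card_congr (Equiv.sigmaFiberEquiv f).symm, Nat.card_eq_fintype_card,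
      Fintype.card_sigma]
    have : ∀ p ∈ Finset.univ, Fintype.card {v // f v = p} = Fintype.card F - 1 := by
      intro p _
      rw [← Nat.card_eq_fintype_card, hfiber p]
    rw [Finset.sum_congr rfl this, Finset.sum_const, Finset.card_univ, smul_eq_mul,
      ← Nat.card_eq_fintype_card]
  rw [← h2, h1, card_eq_pow_finrank (K := F) (V := V)]

/-- counting hyperplanes of a finite vector space -/
lemma aux_card_hyps (V : Type) [AddCommGroup V] [Module F V] [FiniteDimensional F V] :
    Nat.card {h : Submodule F V // finrank F h + 1 = finrank F V} * (Fintype.card F - 1)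
      = Fintype.card F ^ finrank F V - 1 := by
  classical
  have keyAnn : ∀ h : Submodule F V,
      finrank F h.dualAnnihilator + finrank F h = finrank F V := by
    intro h
    have e1 : finrank F h.dualAnnihilator = finrank F (Module.Dual F (V ⧸ h)) :=
      (LinearEquiv.finrank_eq (Submodule.dualQuotEquivDualAnnihilator h)).symm
    rw [e1, Subspace.dual_finrank_eq, Submodule.finrank_quotient_add_finrank]
  have keyCo : ∀ l : Submodule F (Module.Dual F V),
      finrank F l + finrank F l.dualCoannihilator = finrank F V :=
    Subspace.finrank_add_finrank_dualCoannihilator_eq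
  have e : {h : Submodule F V // finrank F h + 1 = finrank F V}
      ≃ {l : Submodule F (Module.Dual F V) // finrank F l = 1} := by
    refine ⟨fun h => ⟨h.1.dualAnnihilator, ?_⟩, fun l => ⟨l.1.dualCoannihilator, ?_⟩, ?_, ?_⟩
    · have := keyAnn h.1; have := h.2; omega
    · have := keyCo l.1; have := l.2
      have hle : finrank F l.1 ≤ finrank F (Module.Dual F V) := Submodule.finrank_le l.1
      rw [Subspace.dual_finrank_eq] at hle
      omega
    · intro h; exact Subtype.ext (Subspace.dualAnnihilator_dualCoannihilator_eq)
    · intro l; exact Subtype.ext (Subspace.dualCoannihilator_dualAnnihilator_eq)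
  rw [Nat.card_congr e]
  haveI : Finite (Module.Dual F V) := Module.finite_of_finite F
  haveI : Fintype (Module.Dual F V) := Fintype.ofFinite _
  rw [aux_card_lines (Module.Dual F V), Subspace.dual_finrank_eq]

/-- third isomorphism finrank bookkeeping -/
lemma aux_finrank_comap (V : Type) [AddCommGroup V] [Module F V] [FiniteDimensional F V]
    (W : Submodule F V) (q : Submodule F (V ⧸ W)) :
    finrank F (q.comap W.mkQ) + finrank F (V ⧸ W) = finrank F q + finrank F V := by
  set S := q.comap W.mkQ with hS
  have hWS : W ≤ S := by
    intro x hx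
    simp [hS, Submodule.mem_comap, (Submodule.Quotient.mk_eq_zero W).2 hx]
  have hmap : S.map W.mkQ = q := by
    rw [hS, Submodule.map_comap_eq, Submodule.range_mkQ, top_inf_eq]
  have e := Submodule.quotientQuotientEquivQuotient W S hWS
  rw [hmap] at e
  have h1 : finrank F ((V ⧸ W) ⧸ q) = finrank F (V ⧸ S) := e.finrank_eq
  have h2 := Submodule.finrank_quotient_add_finrank q
  have h3 := Submodule.finrank_quotient_add_finrank S
  have h4 := Submodule.finrank_quotient_add_finrank W
  omega

/-- counting hyperplanes over a fixed subspace -/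
lemma aux_card_hyps_over (V : Type) [AddCommGroup V] [Module F V] [FiniteDimensional F V]
    (W : Submodule F V) :
    Nat.card {h : Submodule F V // finrank F h + 1 = finrank F V ∧ W ≤ h}
        * (Fintype.card F - 1)
      = Fintype.card F ^ (finrank F V - finrank F W) - 1 := by
  classical
  have hq := Submodule.finrank_quotient_add_finrank W
  have e : {q : Submodule F (V ⧸ W) // finrank F q + 1 = finrank F (V ⧸ W)}
      ≃ {h : Submodule F V // finrank F h + 1 = finrank F V ∧ W ≤ h} := by
    refine ⟨fun q => ⟨q.1.comap W.mkQ, ?_, ?_⟩,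
      fun h => ⟨(h.1.map W.mkQ), ?_⟩, ?_, ?_⟩
    · have := aux_finrank_comap V W q.1; have := q.2; omega
    · intro x hx
      simp [Submodule.mem_comap, (Submodule.Quotient.mk_eq_zero W).2 hx]
    · have hcm : (h.1.map W.mkQ).comap W.mkQ = h.1 := by
        rw [Submodule.comap_map_mkQ, sup_eq_right.2 h.2.2]
      have := aux_finrank_comap V W (h.1.map W.mkQ)
      rw [hcm] at this
      have := h.2.1
      omega
    · intro q
      apply Subtype.ext
      show (q.1.comap W.mkQ).map W.mkQ = q.1
      rw [Submodule.map_comap_eq, Submodule.range_mkQ, top_inf_eq]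
    · intro h
      apply Subtype.ext
      show (h.1.map W.mkQ).comap W.mkQ = h.1
      rw [Submodule.comap_map_mkQ, sup_eq_right.2 h.2.2]
  rw [← Nat.card_congr e, aux_card_hyps (V ⧸ W)]
  congr 2
  omega

end Aux

/-- The points of the `d`-dimensional projective space over `F`: the `1`-dimensional linear
subspaces of `F^(d+1)`. -/
def ProjPoint (F : Type) [Field F] (d : ℕ) : Type :=
  {p : Submodule F (Fin (d + 1) → F) // Module.finrank F p = 1}

/-- The hyperplanes of the `d`-dimensional projective space over `F`: the `d`-dimensional
linear subspaces of `F^(d+1)`. -/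
def ProjHyp (F : Type) [Field F] (d : ℕ) : Type :=
  {h : Submodule F (Fin (d + 1) → F) // Module.finrank F h = d}

noncomputable instance (F : Type) [Field F] [Fintype F] (d : ℕ) : Fintype (ProjPoint F d) := by
  haveI : Finite (Submodule F (Fin (d + 1) → F)) :=
    Finite.of_injective (fun s => (s : Set (Fin (d + 1) → F))) SetLike.coe_injective
  haveI : Finite (ProjPoint F d) := Subtype.finite
  exact Fintype.ofFinite _

noncomputable instance (F : Type) [Field F] [Fintype F] (d : ℕ) : Fintype (ProjHyp F d) := by
  haveI : Finite (Submodule F (Fin (d + 1) → F)) :=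
    Finite.of_injective (fun s => (s : Set (Fin (d + 1) → F))) SetLike.coe_injective
  haveI : Finite (ProjHyp F d) := Subtype.finite
  exact Fintype.ofFinite _

/-- let `F` be a finite field of order `n` and `d ≥ 2`. The boolean
point–hyperplane incidence matrix `B` of the `d`-dimensional projective space over `F`
satisfies `B Bᵀ = n^(d-1) I + ((n^(d-1) - 1)/(n - 1)) J`. -/
theorem incidence_matrix_mul_transpose
    (F : Type) [Field F] [Fintype F] (n : ℕ) (hn : Fintype.card F = n)
    (d : ℕ) (hd : 2 ≤ d)
    (B : Matrix (ProjPoint F d) (ProjHyp F d) ℝ)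
    (hB : ∀ (p : ProjPoint F d) (h : ProjHyp F d),
      B p h = if p.1 ≤ h.1 then 1 else 0) :
    B * B.transpose =
      ((n : ℝ) ^ (d - 1)) • (1 : Matrix (ProjPoint F d) (ProjPoint F d) ℝ) +
        (((n : ℝ) ^ (d - 1) - 1) / ((n : ℝ) - 1)) •
          Matrix.of (fun _ _ => (1 : ℝ)) := by
  classical
  subst hn
  obtain ⟨e, rfl⟩ : ∃ e, d = e + 2 := ⟨d - 2, by omega⟩
  set n := Fintype.card F with hn
  have hn2 : 2 ≤ n := Fintype.one_lt_card
  have hnR : (2 : ℝ) ≤ (n : ℝ) := by exact_mod_cast hn2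
  have hne : (n : ℝ) - 1 ≠ 0 := by linarith
  -- the key counting fact
  have key : ∀ (W : Submodule F (Fin (e + 2 + 1) → F)),
      Nat.card {h : ProjHyp F (e + 2) // W ≤ h.1} * (n - 1)
        = n ^ (e + 2 + 1 - finrank F W) - 1 := by
    intro W
    have e2 : {h : ProjHyp F (e + 2) // W ≤ h.1}
        ≃ {h : Submodule F (Fin (e + 2 + 1) → F) //
            finrank F h + 1 = finrank F (Fin (e + 2 + 1) → F) ∧ W ≤ h} := by
      refine ⟨fun h => ⟨h.1.1, ?_, h.2⟩, fun h => ⟨⟨h.1, ?_⟩, h.2.2⟩, fun _ => rfl, fun _ => rfl⟩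
      · rw [Module.finrank_fin_fun, h.1.2]
      · have h2 := h.2.1
        have h3 : finrank F (Fin (e + 2 + 1) → F) = e + 2 + 1 := Module.finrank_fin_fun F
        omega
    rw [Nat.card_congr e2, aux_card_hyps_over, Module.finrank_fin_fun]
  ext p q
  have hsum : (B * B.transpose) p q
      = (Nat.card {h : ProjHyp F (e + 2) // p.1 ⊔ q.1 ≤ h.1} : ℝ) := by
    rw [Matrix.mul_apply]
    have hterm : ∀ h : ProjHyp F (e + 2), B p h * B.transpose h q
        = if p.1 ⊔ q.1 ≤ h.1 then (1 : ℝ) else 0 := by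
      intro h
      rw [Matrix.transpose_apply, hB, hB]
      by_cases h1 : p.1 ≤ h.1 <;> by_cases h2 : q.1 ≤ h.1 <;>
        simp [h1, h2, sup_le_iff]
    rw [Finset.sum_congr rfl fun h _ => hterm h, Finset.sum_boole]
    congr 1
    rw [Nat.card_eq_fintype_card, Fintype.card_subtype]
  rw [hsum, Matrix.add_apply, Matrix.smul_apply, Matrix.smul_apply, Matrix.one_apply,
    Matrix.of_apply, smul_eq_mul, smul_eq_mul]
  by_cases hpq : p = q
  · -- diagonal entry
    subst hpq
    have hfr1 : finrank F (p.1 ⊔ p.1 : Submodule F (Fin (e + 2 + 1) → F)) = 1 := by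
      rw [sup_idem]; exact p.2
    have hk := key (p.1 ⊔ p.1)
    rw [hfr1] at hk
    have hexp : e + 2 + 1 - 1 = e + 2 := by omega
    rw [hexp] at hk
    have h1 : 1 ≤ n ^ (e + 2) := Nat.one_le_pow _ _ (by omega)
    have hkR : (Nat.card {h : ProjHyp F (e + 2) // p.1 ⊔ p.1 ≤ h.1} : ℝ) * ((n : ℝ) - 1)
        = (n : ℝ) ^ (e + 2) - 1 := by
      have hc := congrArg (Nat.cast (R := ℝ)) hk
      push_cast [Nat.cast_sub (show 1 ≤ n by omega), Nat.cast_sub h1] at hc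
      exact hc
    rw [if_pos rfl]
    have hd1 : e + 2 - 1 = e + 1 := by omega
    rw [hd1]
    set C := (Nat.card {h : ProjHyp F (e + 2) // p.1 ⊔ p.1 ≤ h.1} : ℝ) with hC
    field_simp
    linear_combination hkR
  · -- off-diagonal entry
    have hfr : finrank F (p.1 ⊔ q.1 : Submodule F (Fin (e + 2 + 1) → F)) = 2 := by
      have hsum2 := Submodule.finrank_sup_add_finrank_inf_eq p.1 q.1
      rw [p.2, q.2] at hsum2
      have hle : finrank F (p.1 ⊓ q.1 : Submodule F (Fin (e + 2 + 1) → F)) ≤ 1 := by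
        have := Submodule.finrank_mono (inf_le_left : p.1 ⊓ q.1 ≤ p.1)
        rw [p.2] at this; exact this
      have hne0 : finrank F (p.1 ⊓ q.1 : Submodule F (Fin (e + 2 + 1) → F)) ≠ 1 := by
        intro h1
        have hp : p.1 ⊓ q.1 = p.1 :=
          Submodule.eq_of_le_of_finrank_eq inf_le_left (by rw [h1, p.2])
        have hq : p.1 ⊓ q.1 = q.1 :=
          Submodule.eq_of_le_of_finrank_eq inf_le_right (by rw [h1, q.2])
        exact hpq (Subtype.ext (hp ▸ hq))
      omega
    have hk := key (p.1 ⊔ q.1)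
    rw [hfr] at hk
    have hexp : e + 2 + 1 - 2 = e + 1 := by omega
    rw [hexp] at hk
    have h1 : 1 ≤ n ^ (e + 1) := Nat.one_le_pow _ _ (by omega)
    have hkR : (Nat.card {h : ProjHyp F (e + 2) // p.1 ⊔ q.1 ≤ h.1} : ℝ) * ((n : ℝ) - 1)
        = (n : ℝ) ^ (e + 1) - 1 := by
      have hc := congrArg (Nat.cast (R := ℝ)) hk
      push_cast [Nat.cast_sub (show 1 ≤ n by omega), Nat.cast_sub h1] at hc
      exact hc
    have hd1 : e + 2 - 1 = e + 1 := by omega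
    rw [hd1, if_neg hpq]
    set C := (Nat.card {h : ProjHyp F (e + 2) // p.1 ⊔ q.1 ≤ h.1} : ℝ) with hC
    field_simp
    linear_combination hkR
end
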